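/- arXiv:2002.07099 — 11 statements merged into one kernel-verified Lean document; each statement's English description precedes it below -/
import Mathlib

section
/- Let G be a simple graph on a countably infinite vertex set that is disconnected (its vertex set is nonempty and G is not connected) and IH-homogeneous. Then there exist cardinals n, m, each either a positive natural number or ℵ₀, with max{n, m} = ℵ₀, such that G is isomorphic to the disjoint union of n complete graphs each on m vertices. -/
open Classical in
/-- Extend `f` by mapping `a` to `b`. -/
noncomputable def extendBy {V : Type} (f : V → V) (a b : V) : V → V :=
  Function.update f a b

section Defs

variable {V : Type}

/-- `f` is a graph homomorphism on the finite induced subgraph on `A`. -/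
def IsHomOn (G : SimpleGraph V) (A : Finset V) (f : V → V) : Prop :=
  ∀ ⦃u v : V⦄, u ∈ A → v ∈ A → G.Adj u v → G.Adj (f u) (f v)

/-- `f` is an injective graph homomorphism (monomorphism) on `A`. -/
def IsMonOn (G : SimpleGraph V) (A : Finset V) (f : V → V) : Prop :=
  IsHomOn G A f ∧ Set.InjOn f (↑A : Set V)

/-- `f` is an isomorphism of the induced subgraph on `A` onto its image. -/
def IsIsoOn (G : SimpleGraph V) (A : Finset V) (f : V → V) : Prop :=
  Set.InjOn f (↑A : Set V) ∧
    ∀ ⦃u v : V⦄, u ∈ A → v ∈ A → (G.Adj u v ↔ G.Adj (f u) (f v))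

/-- `F` is a graph homomorphism `G → G`. -/
def IsHomEndo (G : SimpleGraph V) (F : V → V) : Prop :=
  ∀ ⦃u v : V⦄, G.Adj u v → G.Adj (F u) (F v)

/-- `F` is an injective graph homomorphism `G → G`. -/
def IsMonEndo (G : SimpleGraph V) (F : V → V) : Prop :=
  IsHomEndo G F ∧ Function.Injective F

/-- `F` is a self-embedding of `G`. -/
def IsEmbEndo (G : SimpleGraph V) (F : V → V) : Prop :=
  Function.Injective F ∧ ∀ u v : V, G.Adj u v ↔ G.Adj (F u) (F v)

/-- `F` is a surjective graph homomorphism `G → G`. -/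
def IsEpiEndo (G : SimpleGraph V) (F : V → V) : Prop :=
  IsHomEndo G F ∧ Function.Surjective F

/-- `F` is a bijective graph homomorphism `G → G`. -/
def IsBiEndo (G : SimpleGraph V) (F : V → V) : Prop :=
  IsHomEndo G F ∧ Function.Bijective F

/-- `F` is an automorphism of `G`. -/
def IsAutEndo (G : SimpleGraph V) (F : V → V) : Prop :=
  Function.Bijective F ∧ ∀ u v : V, G.Adj u v ↔ G.Adj (F u) (F v)

def IsHHHom (G : SimpleGraph V) : Prop :=
  ∀ (A : Finset V) (f : V → V), IsHomOn G A f →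
    ∃ F : V → V, IsHomEndo G F ∧ ∀ a ∈ A, F a = f a

def IsHMHom (G : SimpleGraph V) : Prop :=
  ∀ (A : Finset V) (f : V → V), IsHomOn G A f →
    ∃ F : V → V, IsMonEndo G F ∧ ∀ a ∈ A, F a = f a

def IsHIHom (G : SimpleGraph V) : Prop :=
  ∀ (A : Finset V) (f : V → V), IsHomOn G A f →
    ∃ F : V → V, IsEmbEndo G F ∧ ∀ a ∈ A, F a = f a

def IsHEHom (G : SimpleGraph V) : Prop :=
  ∀ (A : Finset V) (f : V → V), IsHomOn G A f →
    ∃ F : V → V, IsEpiEndo G F ∧ ∀ a ∈ A, F a = f a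

def IsHBHom (G : SimpleGraph V) : Prop :=
  ∀ (A : Finset V) (f : V → V), IsHomOn G A f →
    ∃ F : V → V, IsBiEndo G F ∧ ∀ a ∈ A, F a = f a

def IsHAHom (G : SimpleGraph V) : Prop :=
  ∀ (A : Finset V) (f : V → V), IsHomOn G A f →
    ∃ F : V → V, IsAutEndo G F ∧ ∀ a ∈ A, F a = f a

def IsMHHom (G : SimpleGraph V) : Prop :=
  ∀ (A : Finset V) (f : V → V), IsMonOn G A f →
    ∃ F : V → V, IsHomEndo G F ∧ ∀ a ∈ A, F a = f a

def IsMMHom (G : SimpleGraph V) : Prop :=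
  ∀ (A : Finset V) (f : V → V), IsMonOn G A f →
    ∃ F : V → V, IsMonEndo G F ∧ ∀ a ∈ A, F a = f a

def IsMIHom (G : SimpleGraph V) : Prop :=
  ∀ (A : Finset V) (f : V → V), IsMonOn G A f →
    ∃ F : V → V, IsEmbEndo G F ∧ ∀ a ∈ A, F a = f a

def IsMEHom (G : SimpleGraph V) : Prop :=
  ∀ (A : Finset V) (f : V → V), IsMonOn G A f →
    ∃ F : V → V, IsEpiEndo G F ∧ ∀ a ∈ A, F a = f a

def IsMBHom (G : SimpleGraph V) : Prop :=
  ∀ (A : Finset V) (f : V → V), IsMonOn G A f →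
    ∃ F : V → V, IsBiEndo G F ∧ ∀ a ∈ A, F a = f a

def IsMAHom (G : SimpleGraph V) : Prop :=
  ∀ (A : Finset V) (f : V → V), IsMonOn G A f →
    ∃ F : V → V, IsAutEndo G F ∧ ∀ a ∈ A, F a = f a

def IsIHHom (G : SimpleGraph V) : Prop :=
  ∀ (A : Finset V) (f : V → V), IsIsoOn G A f →
    ∃ F : V → V, IsHomEndo G F ∧ ∀ a ∈ A, F a = f a

def IsIEHom (G : SimpleGraph V) : Prop :=
  ∀ (A : Finset V) (f : V → V), IsIsoOn G A f →
    ∃ F : V → V, IsEpiEndo G F ∧ ∀ a ∈ A, F a = f a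

/-- A cone over a finite set `S`: a vertex outside `S` adjacent to every vertex of `S`. -/
def IsCone (G : SimpleGraph V) (S : Finset V) (v : V) : Prop :=
  v ∉ S ∧ ∀ s ∈ S, G.Adj v s

/-- A co-cone over a finite set `S`: a vertex outside `S` adjacent to no vertex of `S`. -/
def IsCoCone (G : SimpleGraph V) (S : Finset V) (v : V) : Prop :=
  v ∉ S ∧ ∀ s ∈ S, ¬ G.Adj v s

def HasCoCone (G : SimpleGraph V) (S : Finset V) : Prop :=
  ∃ v : V, IsCoCone G S v

open Classical in
/-- Property (†): every finite surjective homomorphism, and vertex `b` outside its image,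
admits a preimage `a` outside the domain such that `f ∪ {(a,b)}` is a homomorphism. -/
def PropDagger (G : SimpleGraph V) : Prop :=
  ∀ (A : Finset V) (f : V → V), IsHomOn G A f →
    ∀ b : V, b ∉ f '' (↑A : Set V) →
      ∃ a : V, a ∉ A ∧ IsHomOn G (insert a A) (extendBy f a b)

open Classical in
/-- Property (*): every finite surjective monomorphism, and vertex `c` outside its domain,
admits an image `d` outside the codomain such that `f ∪ {(c,d)}` is a homomorphism. -/
def PropStar (G : SimpleGraph V) : Prop :=
  ∀ (A : Finset V) (f : V → V), IsMonOn G A f →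
    ∀ c : V, c ∉ A →
      ∃ d : V, d ∉ f '' (↑A : Set V) ∧ IsHomOn G (insert c A) (extendBy f c d)

/-- The disjoint union of `ι`-many complete graphs, each with vertex set `κ`. -/
def cliqueSum (ι κ : Type) : SimpleGraph (ι × κ) :=
  SimpleGraph.fromRel (fun p q => p.1 = q.1)

end Defs


section StmtZeroAux
variable {V : Type}

lemma IH_triangle (G : SimpleGraph V) (hIH : IsIHHom G)
    (hx : ∀ u : V, ∃ x, ¬ G.Reachable u x) :
    ∀ {a b c : V}, G.Adj a b → G.Adj b c → a ≠ c → G.Adj a c := by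
  classical
  intro a b c hab hbc hac
  by_contra hnadj
  obtain ⟨x, hxr⟩ := hx a
  have hax : a ≠ x := fun h => hxr (h ▸ SimpleGraph.Reachable.refl a)
  have hnax : ¬ G.Adj a x := fun h => hxr h.reachable
  set f : V → V := fun y => if y = a then a else x with hf
  have hfa : f a = a := if_pos rfl
  have hfc : f c = x := if_neg (fun h => hac h.symm)
  have hiso : IsIsoOn G {a, c} f := by
    constructor
    · intro u hu v hv huv
      simp only [Finset.coe_insert, Set.mem_insert_iff, Finset.coe_singleton,
        Set.mem_singleton_iff] at hu hv
      rcases hu with rfl | rfl <;> rcases hv with rfl | rfl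
      · rfl
      · rw [hfa, hfc] at huv; exact absurd huv hax
      · rw [hfa, hfc] at huv; exact absurd huv.symm hax
      · rfl
    · intro u v hu hv
      simp only [Finset.mem_insert, Finset.mem_singleton] at hu hv
      rcases hu with rfl | rfl <;> rcases hv with rfl | rfl
      · rw [hfa]
      · rw [hfa, hfc]; exact iff_of_false hnadj hnax
      · rw [hfa, hfc]; exact iff_of_false (fun h => hnadj h.symm) (fun h => hnax h.symm)
      · rw [hfc]; exact iff_of_false (G.irrefl) (G.irrefl)
  obtain ⟨F, hF, hFeq⟩ := hIH {a, c} f hiso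
  have hFa : F a = a := by rw [hFeq a (by simp), hfa]
  have hFc : F c = x := by rw [hFeq c (by simp), hfc]
  have h1 : G.Adj a (F b) := hFa ▸ hF hab
  have h2 : G.Adj (F b) x := hFc ▸ hF hbc
  exact hxr (h1.reachable.trans h2.reachable)

lemma walk_adj (G : SimpleGraph V)
    (hkey : ∀ {a b c : V}, G.Adj a b → G.Adj b c → a ≠ c → G.Adj a c)
    {u v : V} (p : G.Walk u v) : u ≠ v → G.Adj u v := by
  induction p with
  | nil => intro h; exact absurd rfl h
  | @cons u w v h p ih =>
    intro hne
    by_cases hwv : w = v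
    · exact hwv ▸ h
    · exact hkey h (ih hwv) hne

lemma comp_card_le (G : SimpleGraph V) (hIH : IsIHHom G)
    (hclique : ∀ {a b : V}, G.Reachable a b → a ≠ b → G.Adj a b)
    (u v : V) :
    Cardinal.mk {x // G.Reachable u x} ≤ Cardinal.mk {x // G.Reachable v x} := by
  have hiso : IsIsoOn G {u} (fun _ => v) := by
    constructor
    · intro a ha b hb _
      simp only [Finset.coe_singleton, Set.mem_singleton_iff] at ha hb
      rw [ha, hb]
    · intro a b ha hb
      simp only [Finset.mem_singleton] at ha hb
      subst ha; subst hb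
      exact iff_of_false G.irrefl G.irrefl
  obtain ⟨F, hF, hFeq⟩ := hIH {u} _ hiso
  have hFu : F u = v := hFeq u (Finset.mem_singleton_self u)
  have hmap : ∀ x : V, G.Reachable u x → G.Reachable v (F x) := by
    intro x hx
    rcases eq_or_ne u x with rfl | hne
    · rw [← hFu]
    · have h2 := hF (hclique hx hne)
      rw [hFu] at h2
      exact h2.reachable
  refine ⟨⟨fun x => ⟨F x.1, hmap x.1 x.2⟩, ?_⟩⟩
  intro x y hxy
  simp only [Subtype.mk.injEq] at hxy
  apply Subtype.ext
  by_contra hne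
  have hr : G.Reachable x.1 y.1 := x.2.symm.trans y.2
  have h3 := hF (hclique hr hne)
  rw [hxy] at h3
  exact G.irrefl h3

end StmtZeroAux

/-- A countably infinite disconnected IH-homogeneous graph is isomorphic to
`I_n[K_m]`, a disjoint union of `n` complete graphs each on `m` vertices, where `n, m` are
each a positive natural number or `ℵ₀` and `max n m = ℵ₀`. -/
theorem stmt_0 {V : Type} [Countable V] [Infinite V] (G : SimpleGraph V)
    (hne : Nonempty V) (hdisc : ¬ G.Connected) (hIH : IsIHHom G) :
    ∃ n m : Cardinal, 0 < n ∧ n ≤ Cardinal.aleph0 ∧ 0 < m ∧ m ≤ Cardinal.aleph0 ∧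
      max n m = Cardinal.aleph0 ∧
      ∃ (ι κ : Type), Cardinal.mk ι = n ∧ Cardinal.mk κ = m ∧
        Nonempty (G ≃g cliqueSum ι κ) := by
  classical
  have hpre : ¬ G.Preconnected := fun h => hdisc ⟨h⟩
  have hx : ∀ u : V, ∃ x, ¬ G.Reachable u x := by
    intro u
    by_contra h
    push_neg at h
    apply hpre
    intro a b
    exact (h a).symm.trans (h b)
  have hkey : ∀ {a b c : V}, G.Adj a b → G.Adj b c → a ≠ c → G.Adj a c :=
    IH_triangle G hIH hx
  have hclique : ∀ {a b : V}, G.Reachable a b → a ≠ b → G.Adj a b := by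
    intro a b hr hne
    obtain ⟨p⟩ := hr
    exact walk_adj G (fun {a b c} => hkey) p hne
  have hcard : ∀ u v : V,
      Cardinal.mk {x // G.Reachable u x} = Cardinal.mk {x // G.Reachable v x} :=
    fun u v => le_antisymm (comp_card_le G hIH hclique u v) (comp_card_le G hIH hclique v u)
  obtain ⟨v₀⟩ := hne
  set κ := {x // G.Reachable v₀ x} with hκ
  set ι := G.ConnectedComponent with hι
  have hfib : ∀ c : G.ConnectedComponent,
      Nonempty ({x // G.connectedComponentMk x = c} ≃ κ) := by
    intro c
    obtain ⟨w, rfl⟩ := c.exists_rep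
    have e1 : {x // G.connectedComponentMk x = G.connectedComponentMk w} ≃
        {x // G.Reachable w x} :=
      Equiv.subtypeEquivRight (fun x => by
        rw [SimpleGraph.ConnectedComponent.eq]
        exact ⟨SimpleGraph.Reachable.symm, SimpleGraph.Reachable.symm⟩)
    obtain ⟨e2⟩ := Cardinal.eq.mp (hcard w v₀)
    exact ⟨e1.trans e2⟩
  have e : ∀ c : G.ConnectedComponent, {x // G.connectedComponentMk x = c} ≃ κ :=
    fun c => (hfib c).some
  let Φ : V ≃ ι × κ :=
    (Equiv.sigmaFiberEquiv (G.connectedComponentMk)).symm.trans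
      ((Equiv.sigmaCongrRight e).trans (Equiv.sigmaEquivProd ι κ))
  have hΦ1 : ∀ a : V, (Φ a).1 = G.connectedComponentMk a := fun _ => rfl
  have hadj : ∀ a b : V, G.Adj a b ↔ (cliqueSum ι κ).Adj (Φ a) (Φ b) := by
    intro a b
    rw [cliqueSum, SimpleGraph.fromRel_adj]
    constructor
    · intro h
      refine ⟨fun hne => h.ne (Φ.injective hne), Or.inl ?_⟩
      rw [hΦ1, hΦ1]
      exact SimpleGraph.ConnectedComponent.eq.mpr h.reachable
    · rintro ⟨hne, hor⟩
      have hcc : G.connectedComponentMk a = G.connectedComponentMk b := by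
        rcases hor with h | h
        · rw [← hΦ1 a, ← hΦ1 b]; exact h
        · rw [← hΦ1 a, ← hΦ1 b]; exact h.symm
      have hab : a ≠ b := fun h => hne (by rw [h])
      exact hclique (SimpleGraph.ConnectedComponent.eq.mp hcc) hab
  haveI hcι : Countable ι := by
    have hsurj : Function.Surjective (G.connectedComponentMk) := fun c => c.exists_rep
    exact hsurj.countable
  refine ⟨Cardinal.mk ι, Cardinal.mk κ, ?_, Cardinal.mk_le_aleph0, ?_, Cardinal.mk_le_aleph0,
    ?_, ι, κ, rfl, rfl, ⟨{ toEquiv := Φ, map_rel_iff' := fun {a b} => (hadj a b).symm }⟩⟩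
  · haveI : Nonempty ι := ⟨G.connectedComponentMk v₀⟩
    exact pos_iff_ne_zero.mpr (Cardinal.mk_ne_zero ι)
  · haveI : Nonempty κ := ⟨⟨v₀, SimpleGraph.Reachable.refl v₀⟩⟩
    exact pos_iff_ne_zero.mpr (Cardinal.mk_ne_zero κ)
  · have hV : Cardinal.mk V = Cardinal.aleph0 := Cardinal.mk_eq_aleph0 V
    have hprod : Cardinal.mk ι * Cardinal.mk κ = Cardinal.aleph0 := by
      rw [Cardinal.mul_def]
      rw [← Cardinal.mk_congr Φ]
      exact hV
    have hle : max (Cardinal.mk ι) (Cardinal.mk κ) ≤ Cardinal.aleph0 :=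
      max_le Cardinal.mk_le_aleph0 Cardinal.mk_le_aleph0
    refine le_antisymm hle ?_
    by_contra hlt
    push_neg at hlt
    have h1 : Cardinal.mk ι < Cardinal.aleph0 := lt_of_le_of_lt (le_max_left _ _) hlt
    have h2 : Cardinal.mk κ < Cardinal.aleph0 := lt_of_le_of_lt (le_max_right _ _) hlt
    have h3 := Cardinal.mul_lt_aleph0 h1 h2
    rw [hprod] at h3
    exact lt_irrefl _ h3
end

section
/- For a simple graph G on a countably infinite vertex set, the following are equivalent: (1) G is HM-homogeneous; (2) G is HI-homogeneous; (3) G is HB-homogeneous; (4) G is HA-homogeneous; (5) G is a complete graph (every two distinct vertices are adjacent). -/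
open Classical in
lemma exists_bij_extend {V : Type} [Countable V] [Infinite V]
    (A : Finset V) (f : V → V) (hinj : Set.InjOn f (↑A : Set V)) :
    ∃ F : V → V, Function.Bijective F ∧ ∀ a ∈ A, F a = f a := by
  classical
  set s : Set V := (↑A : Set V) with hs
  have hsfin : s.Finite := A.finite_toSet
  have hBfin : (f '' s).Finite := hsfin.image f
  haveI : Infinite ↥(sᶜ) := hsfin.infinite_compl.to_subtype
  haveI : Infinite ↥((f '' s)ᶜ) := hBfin.infinite_compl.to_subtype
  have hcard : Cardinal.mk ↥(sᶜ) = Cardinal.mk ↥((f '' s)ᶜ) := by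
    rw [Cardinal.mk_eq_aleph0, Cardinal.mk_eq_aleph0]
  obtain ⟨e₂⟩ := Cardinal.eq.1 hcard
  let e₁ : ↥s ≃ ↥(f '' s) := Equiv.Set.imageOfInjOn f s hinj
  let E : V ≃ V :=
    (Equiv.Set.sumCompl s).symm.trans ((e₁.sumCongr e₂).trans (Equiv.Set.sumCompl (f '' s)))
  refine ⟨E, E.bijective, fun a ha => ?_⟩
  have ha' : a ∈ s := by simpa [hs] using ha
  show E a = f a
  simp only [E, Equiv.trans_apply, Equiv.Set.sumCompl_symm_apply_of_mem ha',
    Equiv.sumCongr_apply, Sum.map_inl, Equiv.Set.sumCompl_apply_inl]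
  rfl

lemma complete_HAHom {V : Type} [Countable V] [Infinite V] {G : SimpleGraph V}
    (hc : ∀ u v : V, u ≠ v → G.Adj u v) : IsHAHom G := by
  intro A f hf
  have hinj : Set.InjOn f (↑A : Set V) := by
    intro u hu v hv hfe
    by_contra hne
    have := hf hu hv (hc u v hne)
    rw [hfe] at this
    exact G.irrefl this
  obtain ⟨F, hFbij, hFa⟩ := exists_bij_extend A f hinj
  refine ⟨F, ⟨hFbij, fun u v => ?_⟩, hFa⟩
  constructor
  · intro h
    exact hc _ _ fun he => G.ne_of_adj h (hFbij.1 he)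
  · intro h
    exact hc _ _ fun he => G.ne_of_adj h (by rw [he])

lemma not_complete_no_inj {V : Type} {G : SimpleGraph V}
    (h : ¬ ∀ u v : V, u ≠ v → G.Adj u v)
    (hext : ∀ (A : Finset V) (f : V → V), IsHomOn G A f →
      ∃ F : V → V, Function.Injective F ∧ ∀ a ∈ A, F a = f a) : False := by
  push_neg at h
  obtain ⟨u, v, hne, hnadj⟩ := h
  classical
  have hhom : IsHomOn G {u, v} (fun _ => u) := by
    intro x y hx hy hadj
    exfalso
    simp only [Finset.mem_insert, Finset.mem_singleton] at hx hy
    rcases hx with rfl | rfl <;> rcases hy with rfl | rfl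
    · exact G.irrefl hadj
    · exact hnadj hadj
    · exact hnadj hadj.symm
    · exact G.irrefl hadj
  obtain ⟨F, hFinj, hFa⟩ := hext {u, v} (fun _ => u) hhom
  have h1 : F u = u := hFa u (by simp)
  have h2 : F v = u := hFa v (by simp)
  exact hne (hFinj (h1.trans h2.symm))

/-- For a countably infinite graph, HM-, HI-, HB-, HA-homogeneity are all
equivalent to being a complete graph. -/
theorem stmt_1 {V : Type} [Countable V] [Infinite V] (G : SimpleGraph V) :
    (IsHMHom G ↔ ∀ u v : V, u ≠ v → G.Adj u v) ∧
    (IsHIHom G ↔ ∀ u v : V, u ≠ v → G.Adj u v) ∧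
    (IsHBHom G ↔ ∀ u v : V, u ≠ v → G.Adj u v) ∧
    (IsHAHom G ↔ ∀ u v : V, u ≠ v → G.Adj u v) := by
  have key : ∀ P : (V → V) → Prop,
      (∀ F, P F → Function.Injective F) →
      ((∀ (A : Finset V) (f : V → V), IsHomOn G A f →
        ∃ F : V → V, P F ∧ ∀ a ∈ A, F a = f a) → ∀ u v : V, u ≠ v → G.Adj u v) := by
    intro P hPinj hP
    by_contra h
    exact not_complete_no_inj h (fun A f hf => by
      obtain ⟨F, hPF, hFa⟩ := hP A f hf
      exact ⟨F, hPinj F hPF, hFa⟩)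
  have hHA : (∀ u v : V, u ≠ v → G.Adj u v) → IsHAHom G := complete_HAHom
  have aut_imp : ∀ F : V → V, IsAutEndo G F →
      IsMonEndo G F ∧ IsEmbEndo G F ∧ IsBiEndo G F := by
    intro F hF
    have hhom : IsHomEndo G F := fun u v h => (hF.2 u v).1 h
    exact ⟨⟨hhom, hF.1.1⟩, ⟨hF.1.1, hF.2⟩, ⟨hhom, hF.1⟩⟩
  refine ⟨⟨fun h => key _ (fun F hF => hF.2) h, fun h A f hf => ?_⟩,
    ⟨fun h => key _ (fun F hF => hF.1) h, fun h A f hf => ?_⟩,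
    ⟨fun h => key _ (fun F hF => hF.2.1) h, fun h A f hf => ?_⟩,
    ⟨fun h => key _ (fun F hF => hF.1.1) h, fun h A f hf => ?_⟩⟩
  · obtain ⟨F, hF, hFa⟩ := hHA h A f hf
    exact ⟨F, (aut_imp F hF).1, hFa⟩
  · obtain ⟨F, hF, hFa⟩ := hHA h A f hf
    exact ⟨F, (aut_imp F hF).2.1, hFa⟩
  · obtain ⟨F, hF, hFa⟩ := hHA h A f hf
    exact ⟨F, (aut_imp F hF).2.2, hFa⟩
  · obtain ⟨F, hF, hFa⟩ := hHA h A f hf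
    exact ⟨F, hF, hFa⟩
end

section
/- For a simple graph G on a countably infinite vertex set, the following are equivalent: (1) G is MI-homogeneous; (2) G is MA-homogeneous; (3) G is a complete graph or G has no edges. -/
theorem Set.Finite.exists_equiv_extend_of_injOn {α : Type*} {s : Set α} (hs : s.Finite)
    {f : α → α} (hf : s.InjOn f) : ∃ e : α ≃ α, ∀ x ∈ s, e x = f x := by
  have := hs.to_subtype
  let g : s ↪ α := ⟨s.domRestrict f, hf.injective⟩
  obtain ⟨e, he⟩ : ∃ e : α ≃ α, ∀ x : s, e x = g x := by
    cases finite_or_infinite α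
    · exact Cardinal.extend_function_finite g ⟨Equiv.refl α⟩
    · exact Cardinal.extend_function_of_lt g
        ((Cardinal.lt_aleph0_of_finite s).trans_le (Cardinal.aleph0_le_mk α)) ⟨Equiv.refl α⟩
  exact ⟨e, fun x hx => he ⟨x, hx⟩⟩

section Homogeneity

variable {V : Type}

open SimpleGraph

theorem SimpleGraph.adj_iff_adj_of_injective_of_eq_top_or_eq_bot {G : SimpleGraph V}
    (hG : G = ⊤ ∨ G = ⊥) {F : V → V} (hF : F.Injective) (u v : V) :
    G.Adj u v ↔ G.Adj (F u) (F v) := by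
  rcases hG with rfl | rfl
  · simp only [top_adj, hF.ne_iff]
  · simp only [bot_adj]

theorem isMAHom_of_eq_top_or_eq_bot {G : SimpleGraph V} (hG : G = ⊤ ∨ G = ⊥) :
    IsMAHom G := by
  intro A f hf
  obtain ⟨e, he⟩ := A.finite_toSet.exists_equiv_extend_of_injOn hf.2
  exact ⟨e, ⟨e.bijective, adj_iff_adj_of_injective_of_eq_top_or_eq_bot hG e.injective⟩,
    fun a ha => he a ha⟩

theorem IsMAHom.isMIHom {G : SimpleGraph V} (hG : IsMAHom G) : IsMIHom G := by
  intro A f hf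
  obtain ⟨F, ⟨hbij, hadj⟩, hFf⟩ := hG A f hf
  exact ⟨F, ⟨hbij.injective, hadj⟩, hFf⟩

/-- If `u, v` is a non-edge and `x, y` an edge, the map `u ↦ x, v ↦ y` is a monomorphism
on `{u, v}`, but no embedding can extend it. -/
theorem IsMIHom.eq_top_or_eq_bot {G : SimpleGraph V} (hG : IsMIHom G) : G = ⊤ ∨ G = ⊥ := by
  classical
  rw [eq_top_iff_forall_ne_adj, eq_bot_iff_forall_not_adj]
  by_contra! ⟨⟨u, v, huv, hnadj⟩, x, y, hxy⟩
  let f : V → V := fun w => if w = u then x else y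
  have hfu : f u = x := if_pos rfl
  have hfv : f v = y := if_neg huv.symm
  have hmon : IsMonOn G {u, v} f := by
    refine ⟨fun a b ha hb hab => ?_, ?_⟩
    · simp only [Finset.mem_insert, Finset.mem_singleton] at ha hb
      rcases ha with rfl | rfl <;> rcases hb with rfl | rfl
      exacts [absurd hab G.irrefl, absurd hab hnadj, absurd hab.symm hnadj, absurd hab G.irrefl]
    · rw [Finset.coe_pair, Set.injOn_pair, hfu, hfv]
      exact fun h => absurd h hxy.ne
  obtain ⟨F, ⟨-, hFadj⟩, hFf⟩ := hG _ f hmon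
  refine hnadj ((hFadj u v).2 ?_)
  rwa [hFf u (by simp), hFf v (by simp), hfu, hfv]

end Homogeneity

theorem stmt_2_general {V : Type} (G : SimpleGraph V) :
    (IsMIHom G ↔ ((∀ u v : V, u ≠ v → G.Adj u v) ∨ (∀ u v : V, ¬ G.Adj u v))) ∧
    (IsMAHom G ↔ ((∀ u v : V, u ≠ v → G.Adj u v) ∨ (∀ u v : V, ¬ G.Adj u v))) := by
  rw [← SimpleGraph.eq_top_iff_forall_ne_adj, ← SimpleGraph.eq_bot_iff_forall_not_adj]
  exact ⟨⟨IsMIHom.eq_top_or_eq_bot, fun h => IsMAHom.isMIHom (isMAHom_of_eq_top_or_eq_bot h)⟩,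
    ⟨fun h => IsMIHom.eq_top_or_eq_bot (IsMAHom.isMIHom h), isMAHom_of_eq_top_or_eq_bot⟩⟩

/-- For a countably infinite graph, MI- and MA-homogeneity are each equivalent
to being complete or edgeless. -/
theorem stmt_2 {V : Type} [Countable V] [Infinite V] (G : SimpleGraph V) :
    (IsMIHom G ↔ ((∀ u v : V, u ≠ v → G.Adj u v) ∨ (∀ u v : V, ¬ G.Adj u v))) ∧
    (IsMAHom G ↔ ((∀ u v : V, u ≠ v → G.Adj u v) ∨ (∀ u v : V, ¬ G.Adj u v))) :=
  stmt_2_general G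
end

section
/- Let n ≥ 3 and let G be a simple graph on a countable vertex set such that G contains no clique of size n, and G satisfies the extension axioms of the universal homogeneous K_n-free graph: for all disjoint finite sets A, B of vertices of G such that the induced subgraph on A contains no clique of size n−1, there exists a vertex v ∉ A ∪ B adjacent to every vertex of A and adjacent to no vertex of B. Then G is not MH-homogeneous. -/
/-- A countable `K_n`-free graph (`n ≥ 3`) satisfying the extension axioms
of the universal homogeneous `K_n`-free graph is not MH-homogeneous. -/
theorem stmt_3 {V : Type} [Countable V] (G : SimpleGraph V) (n : ℕ) (hn : 3 ≤ n)
    (hfree : G.CliqueFree n)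
    (hext : ∀ A B : Finset V, Disjoint A B →
      (∀ S : Finset V, S ⊆ A → ¬ G.IsNClique (n - 1) S) →
      ∃ v : V, v ∉ A ∧ v ∉ B ∧ (∀ a ∈ A, G.Adj v a) ∧ ∀ b ∈ B, ¬ G.Adj v b) :
    ¬ IsMHHom G := by
  intro hMH
  classical
  -- independent sets of every size
  have indep : ∀ k : ℕ, ∃ S : Finset V, S.card = k ∧ ∀ u ∈ S, ∀ v ∈ S, ¬ G.Adj u v := by
    intro k
    induction k with
    | zero => exact ⟨∅, rfl, by simp⟩
    | succ k ih =>
      obtain ⟨S, hcard, hind⟩ := ih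
      obtain ⟨v, hvA, hvB, -, hnadj⟩ := hext ∅ S (by simp) (by
        intro T hT h
        have hTe : T = ∅ := Finset.subset_empty.mp hT
        subst hTe
        have h2 := h.2
        simp only [Finset.card_empty] at h2
        omega)
      refine ⟨insert v S, ?_, ?_⟩
      · rw [Finset.card_insert_of_notMem hvB, hcard]
      · intro x hx y hy hadj
        rcases Finset.mem_insert.mp hx with h1 | h1 <;>
          rcases Finset.mem_insert.mp hy with h2 | h2
        · exact G.irrefl (h1 ▸ h2 ▸ hadj)
        · exact hnadj _ h2 (h1 ▸ hadj)
        · exact hnadj _ h1 (h2 ▸ hadj.symm)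
        · exact hind _ h1 _ h2 hadj
  -- cliques of every size up to n-1
  have clique : ∀ k : ℕ, k ≤ n - 1 → ∃ S : Finset V, S.card = k ∧ G.IsClique ↑S := by
    intro k
    induction k with
    | zero => intro _; exact ⟨∅, rfl, by simp⟩
    | succ k ih =>
      intro hk
      obtain ⟨S, hcard, hcl⟩ := ih (by omega)
      obtain ⟨v, hvA, -, hadj, -⟩ := hext S ∅ (by simp) (by
        intro T hT h
        have hle := Finset.card_le_card hT
        rw [h.2, hcard] at hle
        omega)
      refine ⟨insert v S, ?_, ?_⟩
      · rw [Finset.card_insert_of_notMem hvA, hcard]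
      · rw [Finset.coe_insert]
        exact hcl.insert (fun b hb _ => hadj b hb)
  obtain ⟨I, hIcard, hIind⟩ := indep (n - 1)
  obtain ⟨C, hCcard, hCclique⟩ := clique (n - 1) le_rfl
  -- a cone over I
  obtain ⟨w, hwI, -, hwadj, -⟩ := hext I ∅ (by simp) (by
    intro T hT h
    have h2 : 1 < T.card := by rw [h.2]; omega
    obtain ⟨u, hu, v, hv, huv⟩ := Finset.one_lt_card.mp h2
    exact hIind u (hT hu) v (hT hv) (h.1 hu hv huv))
  have hcard : I.card = C.card := by rw [hIcard, hCcard]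
  let e := Finset.equivOfCardEq hcard
  set f : V → V := fun v => if h : v ∈ I then (e ⟨v, h⟩ : V) else v with hf
  have hfmem : ∀ u (h : u ∈ I), f u = (e ⟨u, h⟩ : V) := fun u h => dif_pos h
  have hmon : IsMonOn G I f := by
    constructor
    · intro u v hu hv hadj
      exact absurd hadj (hIind u hu v hv)
    · intro u hu v hv hfe
      rw [hfmem u hu, hfmem v hv] at hfe
      have := e.injective (Subtype.ext hfe)
      exact congrArg Subtype.val this
  obtain ⟨F, hF, hFeq⟩ := hMH I f hmon
  have hFwC : ∀ c ∈ C, G.Adj (F w) c := by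
    intro c hc
    set u := e.symm ⟨c, hc⟩ with hu
    have h1 : G.Adj w u.1 := hwadj u.1 u.2
    have h2 := hF h1
    rw [hFeq u.1 u.2, hfmem u.1 u.2] at h2
    have h3 : (⟨u.1, u.2⟩ : {x // x ∈ I}) = u := rfl
    rw [h3, hu, Equiv.apply_symm_apply] at h2
    exact h2
  have hFwnot : F w ∉ C := fun h => G.irrefl (hFwC _ h)
  apply hfree (insert (F w) C)
  constructor
  · rw [Finset.coe_insert]
    exact hCclique.insert (fun b hb _ => hFwC b hb)
  · rw [Finset.card_insert_of_notMem hFwnot, hCcard]; omega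
end

section
/- If G is a simple graph on a countably infinite vertex set that is HH-homogeneous and satisfies property (†), then G is HE-homogeneous. -/
section Aux

open Classical

variable {V : Type} {G : SimpleGraph V}

lemma key_lemma (hHH : IsHHHom G) (hdag : PropDagger G)
    {A : Finset V} {f : V → V} (hf : IsHomOn G A f) (v : V) :
    ∃ (A' : Finset V) (f' : V → V), A ⊆ A' ∧ IsHomOn G A' f' ∧
      (∀ a ∈ A, f' a = f a) ∧ v ∈ A' ∧ ∃ a ∈ A', f' a = v := by
  obtain ⟨F, hF, hFa⟩ := hHH A f hf
  by_cases hb : v ∈ F '' (↑(insert v A) : Set V)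
  · obtain ⟨a, ha, hav⟩ := hb
    exact ⟨insert v A, F, Finset.subset_insert _ _,
      fun u w _ _ h => hF h, hFa, Finset.mem_insert_self _ _,
      a, Finset.mem_coe.mp ha, hav⟩
  · obtain ⟨a, haA, hhom⟩ := hdag (insert v A) F (fun u w _ _ h => hF h) v hb
    refine ⟨insert a (insert v A), extendBy F a v, ?_, hhom, ?_, ?_, a,
      Finset.mem_insert_self _ _, ?_⟩
    · exact (Finset.subset_insert _ _).trans (Finset.subset_insert _ _)
    · intro x hx
      have hxa : x ≠ a := fun h => haA (h ▸ Finset.mem_insert_of_mem hx)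
      simp [extendBy, Function.update_of_ne hxa, hFa x hx]
    · exact Finset.mem_insert_of_mem (Finset.mem_insert_self _ _)
    · simp [extendBy]

noncomputable def nextState (hHH : IsHHHom G) (hdag : PropDagger G)
    (p : Σ' (A : Finset V) (f : V → V), IsHomOn G A f) (v : V) :
    Σ' (A : Finset V) (f : V → V), IsHomOn G A f :=
  ⟨(key_lemma hHH hdag p.2.2 v).choose,
   (key_lemma hHH hdag p.2.2 v).choose_spec.choose,
   (key_lemma hHH hdag p.2.2 v).choose_spec.choose_spec.2.1⟩

lemma nextState_spec (hHH : IsHHHom G) (hdag : PropDagger G)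
    (p : Σ' (A : Finset V) (f : V → V), IsHomOn G A f) (v : V) :
    p.1 ⊆ (nextState hHH hdag p v).1 ∧
    (∀ a ∈ p.1, (nextState hHH hdag p v).2.1 a = p.2.1 a) ∧
    v ∈ (nextState hHH hdag p v).1 ∧
    ∃ a ∈ (nextState hHH hdag p v).1, (nextState hHH hdag p v).2.1 a = v := by
  have h := (key_lemma hHH hdag p.2.2 v).choose_spec.choose_spec
  exact ⟨h.1, h.2.2.1, h.2.2.2.1, h.2.2.2.2⟩

end Aux

/-- A countably infinite HH-homogeneous graph with property (†) is
HE-homogeneous. -/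
theorem stmt_4 {V : Type} [Countable V] [Infinite V] (G : SimpleGraph V)
    (hHH : IsHHHom G) (hdag : PropDagger G) : IsHEHom G := by
  intro A f hf
  obtain ⟨e, he⟩ := exists_surjective_nat V
  let seq : ℕ → Σ' (A : Finset V) (f : V → V), IsHomOn G A f :=
    fun n => Nat.rec ⟨A, f, hf⟩ (fun n p => nextState hHH hdag p (e n)) n
  have hseq : ∀ n, seq (n + 1) = nextState hHH hdag (seq n) (e n) := fun n => rfl
  have hmono : ∀ n m, m ≤ n →
      (seq m).1 ⊆ (seq n).1 ∧ ∀ a ∈ (seq m).1, (seq n).2.1 a = (seq m).2.1 a := by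
    intro n
    induction n with
    | zero => intro m hm; rw [Nat.le_zero.mp hm]; exact ⟨subset_rfl, fun _ _ => rfl⟩
    | succ n ih =>
      intro m hm
      rcases Nat.lt_or_ge m (n + 1) with h | h
      · have h' := ih m (Nat.lt_succ_iff.mp h)
        have hs := nextState_spec hHH hdag (seq n) (e n)
        rw [hseq n]
        refine ⟨h'.1.trans hs.1, fun a ha => ?_⟩
        rw [hs.2.1 a (h'.1 ha), h'.2 a ha]
      · have : m = n + 1 := le_antisymm hm h
        rw [this]; exact ⟨subset_rfl, fun _ _ => rfl⟩
  classical
  have hks : ∀ v : V, ∃ k, e k = v := he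
  let kf : V → ℕ := fun v => (hks v).choose
  let F : V → V := fun v => (seq (kf v + 1)).2.1 v
  have hmem : ∀ v : V, v ∈ (seq (kf v + 1)).1 := by
    intro v
    have hs := (nextState_spec hHH hdag (seq (kf v)) (e (kf v))).2.2.1
    rw [← hseq (kf v)] at hs
    rwa [(hks v).choose_spec] at hs
  -- F agrees with every stage on its domain
  have hFa : ∀ (n : ℕ) (v : V), v ∈ (seq n).1 → (seq n).2.1 v = F v := by
    intro n v hv
    have h1 := hmono (max n (kf v + 1)) n (le_max_left _ _)
    have h2 := hmono (max n (kf v + 1)) (kf v + 1) (le_max_right _ _)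
    have e1 := h1.2 v hv
    have e2 := h2.2 v (hmem v)
    rw [← e1, e2]
  refine ⟨F, ⟨?_, ?_⟩, ?_⟩
  · -- homomorphism
    intro u v huv
    set N := max (kf u + 1) (kf v + 1) with hN
    have hu : u ∈ (seq N).1 := (hmono N (kf u + 1) (le_max_left _ _)).1 (hmem u)
    have hv : v ∈ (seq N).1 := (hmono N (kf v + 1) (le_max_right _ _)).1 (hmem v)
    have := (seq N).2.2 hu hv huv
    rwa [hFa N u hu, hFa N v hv] at this
  · -- surjective
    intro b
    obtain ⟨k, hk⟩ := he b
    obtain ⟨a, ha, hab⟩ := (nextState_spec hHH hdag (seq k) (e k)).2.2.2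
    rw [← hseq k] at ha hab
    exact ⟨a, by rw [← hFa (k + 1) a ha, hab, hk]⟩
  · -- agrees with f on A
    intro a ha
    have : (seq 0).2.1 a = F a := hFa 0 a ha
    exact this.symm
end

section
/- If G is a simple graph on a countably infinite vertex set that is HE-homogeneous and satisfies property (*), then G is MB-homogeneous. -/
section Aux

variable {V : Type}

open Classical

/-- One combined back-and-forth step. -/
lemma step_lemma (G : SimpleGraph V) (hHE : IsHEHom G) (hstar : PropStar G)
    {A : Finset V} {f : V → V} (h : IsMonOn G A f) (t : V) :
    ∃ p : Finset V × (V → V), IsMonOn G p.1 p.2 ∧ A ⊆ p.1 ∧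
      (∀ v ∈ A, p.2 v = f v) ∧ t ∈ p.1 ∧ t ∈ p.2 '' (↑p.1 : Set V) := by
  -- Phase 1: put `t` in the domain.
  obtain ⟨A1, f1, h1, hsub1, hag1, ht1⟩ :
      ∃ A1 f1, IsMonOn G A1 f1 ∧ A ⊆ A1 ∧ (∀ v ∈ A, f1 v = f v) ∧ t ∈ A1 := by
    by_cases htA : t ∈ A
    · exact ⟨A, f, h, subset_rfl, fun v _ => rfl, htA⟩
    · obtain ⟨d, hd, hhom⟩ := hstar A f h t htA
      refine ⟨insert t A, extendBy f t d, ⟨hhom, ?_⟩, Finset.subset_insert _ _,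
        fun v hv => Function.update_of_ne (ne_of_mem_of_not_mem hv htA) _ _,
        Finset.mem_insert_self _ _⟩
      intro u hu v hv huv
      simp only [Finset.coe_insert, Set.mem_insert_iff, Finset.mem_coe] at hu hv
      rcases hu with rfl | hu <;> rcases hv with rfl | hv
      · rfl
      · exfalso
        rw [extendBy, Function.update_self,
          Function.update_of_ne (ne_of_mem_of_not_mem hv htA)] at huv
        exact hd ⟨v, hv, huv.symm⟩
      · exfalso
        rw [extendBy, Function.update_self,
          Function.update_of_ne (ne_of_mem_of_not_mem hu htA)] at huv
        exact hd ⟨u, hu, huv⟩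
      · rw [extendBy, Function.update_of_ne (ne_of_mem_of_not_mem hu htA),
          Function.update_of_ne (ne_of_mem_of_not_mem hv htA)] at huv
        exact h.2 hu hv huv
  -- Phase 2: put `t` in the image.
  by_cases htim : t ∈ f1 '' (↑A1 : Set V)
  · exact ⟨(A1, f1), h1, hsub1, hag1, ht1, htim⟩
  · obtain ⟨F, ⟨hFhom, hFsurj⟩, hFag⟩ := hHE A1 f1 h1.1
    obtain ⟨a, ha⟩ := hFsurj t
    have haA1 : a ∉ A1 := fun haA => htim ⟨a, haA, by rw [← hFag a haA, ha]⟩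
    have hgag : ∀ v ∈ A1, extendBy f1 a t v = f1 v := fun v hv =>
      Function.update_of_ne (ne_of_mem_of_not_mem hv haA1) _ _
    have hgF : ∀ v ∈ insert a A1, extendBy f1 a t v = F v := by
      intro v hv
      rcases Finset.mem_insert.mp hv with rfl | hv
      · rw [extendBy, Function.update_self, ha]
      · rw [hgag v hv, hFag v hv]
    refine ⟨(insert a A1, extendBy f1 a t), ⟨?_, ?_⟩,
      hsub1.trans (Finset.subset_insert _ _),
      fun v hv => (hgag v (hsub1 hv)).trans (hag1 v hv),
      Finset.mem_insert_of_mem ht1,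
      ⟨a, by simp, by dsimp only; rw [extendBy, Function.update_self]⟩⟩
    · intro u v hu hv huv
      dsimp only at hu hv ⊢
      rw [hgF u hu, hgF v hv]; exact hFhom huv
    · intro u hu v hv huv
      dsimp only at hu hv huv
      simp only [Finset.coe_insert, Set.mem_insert_iff, Finset.mem_coe] at hu hv
      rcases hu with rfl | hu <;> rcases hv with rfl | hv
      · rfl
      · exfalso
        rw [hgag v hv, extendBy, Function.update_self] at huv
        exact htim ⟨v, hv, huv.symm⟩
      · exfalso
        rw [hgag u hu, extendBy, Function.update_self] at huv
        exact htim ⟨u, hu, huv⟩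
      · rw [hgag u hu, hgag v hv] at huv
        exact h1.2 hu hv huv

/-- The back-and-forth chain. -/
noncomputable def chainAux (G : SimpleGraph V) (hHE : IsHEHom G) (hstar : PropStar G)
    (e : ℕ → V) (A₀ : Finset V) (f₀ : V → V) (h₀ : IsMonOn G A₀ f₀) :
    ℕ → {p : Finset V × (V → V) // IsMonOn G p.1 p.2}
  | 0 => ⟨(A₀, f₀), h₀⟩
  | n + 1 =>
    ⟨(step_lemma G hHE hstar (chainAux G hHE hstar e A₀ f₀ h₀ n).2 (e n)).choose,
      (step_lemma G hHE hstar (chainAux G hHE hstar e A₀ f₀ h₀ n).2 (e n)).choose_spec.1⟩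

lemma chainAux_spec (G : SimpleGraph V) (hHE : IsHEHom G) (hstar : PropStar G)
    (e : ℕ → V) (A₀ : Finset V) (f₀ : V → V) (h₀ : IsMonOn G A₀ f₀) (n : ℕ) :
    (chainAux G hHE hstar e A₀ f₀ h₀ n).1.1 ⊆ (chainAux G hHE hstar e A₀ f₀ h₀ (n+1)).1.1 ∧
    (∀ v ∈ (chainAux G hHE hstar e A₀ f₀ h₀ n).1.1,
      (chainAux G hHE hstar e A₀ f₀ h₀ (n+1)).1.2 v =
        (chainAux G hHE hstar e A₀ f₀ h₀ n).1.2 v) ∧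
    e n ∈ (chainAux G hHE hstar e A₀ f₀ h₀ (n+1)).1.1 ∧
    e n ∈ (chainAux G hHE hstar e A₀ f₀ h₀ (n+1)).1.2 ''
      (↑(chainAux G hHE hstar e A₀ f₀ h₀ (n+1)).1.1 : Set V) := by
  have hs := (step_lemma G hHE hstar (chainAux G hHE hstar e A₀ f₀ h₀ n).2 (e n)).choose_spec
  exact ⟨hs.2.1, hs.2.2.1, hs.2.2.2.1, hs.2.2.2.2⟩

lemma chainAux_le (G : SimpleGraph V) (hHE : IsHEHom G) (hstar : PropStar G)
    (e : ℕ → V) (A₀ : Finset V) (f₀ : V → V) (h₀ : IsMonOn G A₀ f₀) {n m : ℕ} (h : n ≤ m) :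
    (chainAux G hHE hstar e A₀ f₀ h₀ n).1.1 ⊆ (chainAux G hHE hstar e A₀ f₀ h₀ m).1.1 ∧
    ∀ v ∈ (chainAux G hHE hstar e A₀ f₀ h₀ n).1.1,
      (chainAux G hHE hstar e A₀ f₀ h₀ m).1.2 v = (chainAux G hHE hstar e A₀ f₀ h₀ n).1.2 v := by
  induction m, h using Nat.le_induction with
  | base => exact ⟨subset_rfl, fun v _ => rfl⟩
  | succ m hm ih =>
    have hs := chainAux_spec G hHE hstar e A₀ f₀ h₀ m
    exact ⟨ih.1.trans hs.1, fun v hv => (hs.2.1 v (ih.1 hv)).trans (ih.2 v hv)⟩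

end Aux

/-- A countably infinite HE-homogeneous graph with property (*) is
MB-homogeneous. -/
theorem stmt_5 {V : Type} [Countable V] [Infinite V] (G : SimpleGraph V)
    (hHE : IsHEHom G) (hstar : PropStar G) : IsMBHom G := by
  obtain ⟨en⟩ : Nonempty (V ≃ ℕ) := nonempty_equiv_of_countable
  intro A₀ f₀ h₀
  set C := chainAux G hHE hstar en.symm A₀ f₀ h₀ with hC
  -- the limit function
  set F : V → V := fun v => (C (en v + 1)).1.2 v with hF
  have hmem : ∀ v : V, v ∈ (C (en v + 1)).1.1 := by
    intro v
    have := (chainAux_spec G hHE hstar en.symm A₀ f₀ h₀ (en v)).2.2.1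
    rwa [Equiv.symm_apply_apply] at this
  have hkey : ∀ (m : ℕ) (v : V), v ∈ (C m).1.1 → F v = (C m).1.2 v := by
    intro m v hv
    have h1 := chainAux_le G hHE hstar en.symm A₀ f₀ h₀ (le_max_left m (en v + 1))
    have h2 := chainAux_le G hHE hstar en.symm A₀ f₀ h₀ (le_max_right m (en v + 1))
    rw [hF]
    simp only
    rw [← h2.2 v (hmem v), h1.2 v hv]
  refine ⟨F, ⟨?_, ?_, ?_⟩, ?_⟩
  · -- homomorphism
    intro u v huv
    set m := max (en u + 1) (en v + 1) with hm
    have hu := (chainAux_le G hHE hstar en.symm A₀ f₀ h₀ (le_max_left (en u + 1) (en v + 1))).1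
      (hmem u)
    have hv := (chainAux_le G hHE hstar en.symm A₀ f₀ h₀ (le_max_right (en u + 1) (en v + 1))).1
      (hmem v)
    rw [hkey m u hu, hkey m v hv]
    exact (C m).2.1 hu hv huv
  · -- injective
    intro u v huv
    set m := max (en u + 1) (en v + 1) with hm
    have hu := (chainAux_le G hHE hstar en.symm A₀ f₀ h₀ (le_max_left (en u + 1) (en v + 1))).1
      (hmem u)
    have hv := (chainAux_le G hHE hstar en.symm A₀ f₀ h₀ (le_max_right (en u + 1) (en v + 1))).1
      (hmem v)
    rw [hkey m u hu, hkey m v hv] at huv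
    exact (C m).2.2 hu hv huv
  · -- surjective
    intro w
    have := (chainAux_spec G hHE hstar en.symm A₀ f₀ h₀ (en w)).2.2.2
    rw [Equiv.symm_apply_apply] at this
    obtain ⟨a, ha, haw⟩ := this
    exact ⟨a, by rw [hkey (en w + 1) a ha]; exact haw⟩
  · -- extends f₀
    intro a ha
    have h0 : a ∈ (C 0).1.1 := ha
    rw [hkey 0 a h0]
    rfl
end

section
/- Let G be a connected HE-homogeneous simple graph on a countably infinite vertex set containing at least one nonedge (two distinct nonadjacent vertices). Then: (1) every vertex of G has infinitely many neighbours and infinitely many non-neighbours; (2) for every finite clique C of G there is a vertex v ∉ C adjacent to every vertex of C (no finite clique is maximal); (3) for every finite independent set S of G there is a vertex v ∉ S adjacent to no vertex of S (no finite independent set is maximal). -/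
section AuxLemmas


variable {V : Type}

private lemma exists_cherry_aux (G : SimpleGraph V) :
    ∀ (n : ℕ) (u v : V), u ≠ v → ¬ G.Adj u v → ∀ (w : G.Walk u v), w.length ≤ n →
      ∃ x y m : V, x ≠ y ∧ ¬ G.Adj x y ∧ G.Adj m x ∧ G.Adj m y := by
  intro n
  induction n with
  | zero =>
    intro u v hne _ w hw
    cases w with
    | nil => exact absurd rfl hne
    | cons h p => simp [SimpleGraph.Walk.length_cons] at hw
  | succ n ih =>
    intro u v hne hadj w hw
    cases w with
    | nil => exact absurd rfl hne
    | cons h p =>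
      rename_i b
      cases p with
      | nil => exact absurd h hadj
      | cons h2 q =>
        rename_i c
        by_cases hc : u = c
        · refine ih u v hne hadj (q.copy hc.symm rfl) ?_
          simp [SimpleGraph.Walk.length_copy] at hw ⊢
          omega
        · by_cases hadj2 : G.Adj u c
          · refine ih u v hne hadj (SimpleGraph.Walk.cons hadj2 q) ?_
            simp [SimpleGraph.Walk.length_cons] at hw ⊢
            omega
          · exact ⟨u, c, b, hc, hadj2, h.symm, h2⟩

private lemma exists_cherry (G : SimpleGraph V) (hconn : G.Connected)
    (hne : ∃ u v : V, u ≠ v ∧ ¬ G.Adj u v) :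
    ∃ x y m : V, x ≠ y ∧ ¬ G.Adj x y ∧ G.Adj m x ∧ G.Adj m y := by
  obtain ⟨u, v, huv, hadj⟩ := hne
  obtain ⟨w⟩ := hconn.preconnected u v
  exact exists_cherry_aux G w.length u v huv hadj w le_rfl

/-- Every pair of vertices has a common neighbour. -/
private lemma common_nbr (G : SimpleGraph V) (hconn : G.Connected) (hHE : IsHEHom G)
    (hne : ∃ u v : V, u ≠ v ∧ ¬ G.Adj u v) (p q : V) :
    ∃ m : V, G.Adj m p ∧ G.Adj m q := by
  classical
  obtain ⟨x, y, m, hxy, hnadj, hmx, hmy⟩ := exists_cherry G hconn hne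
  set f : V → V := fun w => if w = x then p else q with hf
  have hhom : IsHomOn G {x, y} f := by
    intro a b ha hb hab
    simp only [Finset.mem_insert, Finset.mem_singleton] at ha hb
    rcases ha with rfl | rfl <;> rcases hb with rfl | rfl
    · exact absurd hab (G.irrefl)
    · exact absurd hab hnadj
    · exact absurd hab.symm hnadj
    · exact absurd hab (G.irrefl)
  obtain ⟨F, ⟨hFhom, -⟩, hagree⟩ := hHE {x, y} f hhom
  have hFx : F x = p := by
    rw [hagree x (by simp)]; simp [hf]
  have hFy : F y = q := by
    rw [hagree y (by simp)]; simp [hf, hxy.symm]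
  exact ⟨F m, hFx ▸ hFhom hmx, hFy ▸ hFhom hmy⟩

/-- Some vertex has infinitely many neighbours. -/
private lemma exists_infinite_nbhd (G : SimpleGraph V) [Infinite V]
    (hconn : G.Connected) (hHE : IsHEHom G)
    (hne : ∃ u v : V, u ≠ v ∧ ¬ G.Adj u v) :
    ∃ v₀ : V, {w : V | G.Adj v₀ w}.Infinite := by
  classical
  by_contra hcon
  push_neg at hcon
  obtain ⟨p⟩ : Nonempty V := inferInstance
  have hball : (Set.univ : Set V) ⊆
      ⋃ q ∈ {w : V | G.Adj p w}, {w : V | G.Adj q w} := by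
    intro r _
    obtain ⟨m, hmp, hmr⟩ := common_nbr G hconn hHE hne p r
    exact Set.mem_biUnion (show G.Adj p m from hmp.symm) hmr
  have hfin : (Set.univ : Set V).Finite :=
    Set.Finite.subset (Set.Finite.biUnion (hcon p) (fun q _ => hcon q)) hball
  exact Set.infinite_univ hfin

/-- Every finite clique has a cone. -/
private lemma clique_cone (G : SimpleGraph V) [Infinite V]
    (hconn : G.Connected) (hHE : IsHEHom G)
    (hne : ∃ u v : V, u ≠ v ∧ ¬ G.Adj u v)
    (C : Finset V) (hC : G.IsClique (↑C : Set V)) :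
    ∃ v : V, IsCone G C v := by
  classical
  obtain ⟨v₀, hinf⟩ := exists_infinite_nbhd G hconn hHE hne
  obtain ⟨t, hts, htfin, htcard⟩ := hinf.exists_subset_ncard_eq C.card
  set T : Finset V := htfin.toFinset with hT
  have hTsub : ∀ w ∈ T, G.Adj v₀ w := by
    intro w hw
    exact hts (htfin.mem_toFinset.mp hw)
  have hcard : T.card = C.card := by
    rw [hT, ← Set.ncard_coe_finset, htfin.coe_toFinset, htcard]
  set e : {x // x ∈ T} ≃ {x // x ∈ C} := Finset.equivOfCardEq hcard with he
  set f : V → V := fun w => if h : w ∈ T then (e ⟨w, h⟩ : V) else w with hf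
  have hhom : IsHomOn G T f := by
    intro a b ha hb hab
    have hne' : a ≠ b := hab.ne
    simp only [hf, dif_pos ha, dif_pos hb]
    refine hC (e ⟨a, ha⟩).2 (e ⟨b, hb⟩).2 ?_
    intro hEq
    apply hne'
    have : e ⟨a, ha⟩ = e ⟨b, hb⟩ := Subtype.ext hEq
    have := e.injective this
    exact congrArg Subtype.val this
  obtain ⟨F, ⟨hFhom, -⟩, hagree⟩ := hHE T f hhom
  refine ⟨F v₀, ?_, ?_⟩
  · intro hmem
    have : ∀ c ∈ C, G.Adj (F v₀) c := by
      intro c hc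
      set t' := e.symm ⟨c, hc⟩ with ht'
      have hft : f (t' : V) = c := by
        simp only [hf, dif_pos t'.2]
        have : (⟨(t' : V), t'.2⟩ : {x // x ∈ T}) = t' := Subtype.ext rfl
        rw [this, ht', Equiv.apply_symm_apply]
      have := hFhom (hTsub (t' : V) t'.2)
      rwa [hagree (t' : V) t'.2, hft] at this
    exact G.irrefl (this _ hmem)
  · intro c hc
    set t' := e.symm ⟨c, hc⟩ with ht'
    have hft : f (t' : V) = c := by
      simp only [hf, dif_pos t'.2]
      have : (⟨(t' : V), t'.2⟩ : {x // x ∈ T}) = t' := Subtype.ext rfl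
      rw [this, ht', Equiv.apply_symm_apply]
    have := hFhom (hTsub (t' : V) t'.2)
    rwa [hagree (t' : V) t'.2, hft] at this

/-- Every finite independent set has a co-cone. -/
private lemma indep_cocone (G : SimpleGraph V) (hHE : IsHEHom G)
    (hne : ∃ u v : V, u ≠ v ∧ ¬ G.Adj u v)
    (S : Finset V) (hS : (↑S : Set V).Pairwise (fun a b => ¬ G.Adj a b)) :
    ∃ v : V, IsCoCone G S v := by
  classical
  obtain ⟨u, v, huv, hnadj⟩ := hne
  have hhom : IsHomOn G S (fun _ => u) := by
    intro a b ha hb hab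
    by_cases h : a = b
    · exact absurd (h ▸ hab) (G.irrefl)
    · exact absurd hab (hS ha hb h)
  obtain ⟨F, ⟨hFhom, hFsurj⟩, hagree⟩ := hHE S (fun _ => u) hhom
  obtain ⟨x, hx⟩ := hFsurj v
  refine ⟨x, ?_, ?_⟩
  · intro hmem
    rw [hagree x hmem] at hx
    exact huv hx
  · intro s hs hadj
    have := hFhom hadj
    rw [hx, hagree s hs] at this
    exact hnadj this.symm

/-- Arbitrarily large cliques through any vertex. -/
private lemma clique_through (G : SimpleGraph V) [Infinite V]
    (hconn : G.Connected) (hHE : IsHEHom G)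
    (hne : ∃ u v : V, u ≠ v ∧ ¬ G.Adj u v) (v : V) :
    ∀ n : ℕ, ∃ C : Finset V, G.IsClique (↑C : Set V) ∧ v ∈ C ∧ n ≤ C.card := by
  classical
  intro n
  induction n with
  | zero =>
    refine ⟨{v}, ?_, by simp, by simp⟩
    simp [SimpleGraph.isClique_iff, Set.Pairwise]
  | succ n ih =>
    obtain ⟨C, hclique, hv, hcard⟩ := ih
    obtain ⟨m, hmC, hmadj⟩ := clique_cone G hconn hHE hne C hclique
    refine ⟨insert m C, ?_, Finset.mem_insert_of_mem hv, ?_⟩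
    · rw [Finset.coe_insert]
      intro a ha b hb hab
      rcases ha with rfl | ha <;> rcases hb with rfl | hb
      · exact absurd rfl hab
      · exact hmadj b hb
      · exact (hmadj a ha).symm
      · exact hclique ha hb hab
    · rw [Finset.card_insert_of_notMem hmC]
      omega

/-- Arbitrarily large independent sets through any vertex. -/
private lemma indep_through (G : SimpleGraph V) (hHE : IsHEHom G)
    (hne : ∃ u v : V, u ≠ v ∧ ¬ G.Adj u v) (v : V) :
    ∀ n : ℕ, ∃ S : Finset V,
      (↑S : Set V).Pairwise (fun a b => ¬ G.Adj a b) ∧ v ∈ S ∧ n ≤ S.card := by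
  classical
  intro n
  induction n with
  | zero =>
    refine ⟨{v}, ?_, by simp, by simp⟩
    simp [Set.Pairwise]
  | succ n ih =>
    obtain ⟨S, hindep, hv, hcard⟩ := ih
    obtain ⟨x, hxS, hxadj⟩ := indep_cocone G hHE hne S hindep
    refine ⟨insert x S, ?_, Finset.mem_insert_of_mem hv, ?_⟩
    · rw [Finset.coe_insert]
      intro a ha b hb hab
      rcases ha with rfl | ha <;> rcases hb with rfl | hb
      · exact absurd rfl hab
      · exact hxadj b hb
      · exact fun h => hxadj a ha h.symm
      · exact hindep ha hb hab
    · rw [Finset.card_insert_of_notMem hxS]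
      omega

end AuxLemmas


/-- In a connected HE-homogeneous countably infinite graph with a nonedge:
every vertex has infinite degree and codegree, no finite clique is maximal,
and no finite independent set is maximal. -/
theorem stmt_7 {V : Type} [Countable V] [Infinite V] (G : SimpleGraph V)
    (hconn : G.Connected) (hHE : IsHEHom G)
    (hne : ∃ u v : V, u ≠ v ∧ ¬ G.Adj u v) :
    (∀ v : V, {w : V | G.Adj v w}.Infinite ∧ {w : V | w ≠ v ∧ ¬ G.Adj v w}.Infinite) ∧
    (∀ C : Finset V, G.IsClique (↑C : Set V) → ∃ v : V, IsCone G C v) ∧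
    (∀ S : Finset V, (↑S : Set V).Pairwise (fun a b => ¬ G.Adj a b) →
      ∃ v : V, IsCoCone G S v) := by
  classical
  refine ⟨?_, fun C hC => clique_cone G hconn hHE hne C hC,
      fun S hS => indep_cocone G hHE hne S hS⟩
  intro v
  constructor
  · by_contra hfin
    rw [Set.not_infinite] at hfin
    obtain ⟨C, hclique, hv, hcard⟩ :=
      clique_through G hconn hHE hne v (hfin.toFinset.card + 2)
    have hsub : C.erase v ⊆ hfin.toFinset := by
      intro w hw
      rw [Set.Finite.mem_toFinset]
      exact hclique hv (Finset.mem_of_mem_erase hw)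
        (fun h => (Finset.mem_erase.mp hw).1 h.symm)
    have h1 := Finset.card_le_card hsub
    have h2 : C.card - 1 ≤ (C.erase v).card := by
      rw [Finset.card_erase_of_mem hv]
    omega
  · by_contra hfin
    rw [Set.not_infinite] at hfin
    obtain ⟨S, hindep, hv, hcard⟩ :=
      indep_through G hHE hne v (hfin.toFinset.card + 2)
    have hsub : S.erase v ⊆ hfin.toFinset := by
      intro w hw
      rw [Set.Finite.mem_toFinset]
      refine ⟨(Finset.mem_erase.mp hw).1, ?_⟩
      exact hindep hv (Finset.mem_of_mem_erase hw)
        (fun h => (Finset.mem_erase.mp hw).1 h.symm)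
    have h1 := Finset.card_le_card hsub
    have h2 : S.card - 1 ≤ (S.erase v).card := by
      rw [Finset.card_erase_of_mem hv]
    omega
end

section
/- A simple graph G on a countably infinite vertex set is HE-homogeneous if and only if G is HH-homogeneous and the following two conditions hold: (1) for all finite vertex sets A, B of G such that the induced subgraphs on A and B are isomorphic, A has a co-cone in G if and only if B has a co-cone in G; (2) for all finite vertex sets A, B of G, if there exists a graph homomorphism from the induced subgraph on A onto the induced subgraph on B that is surjective on vertices, and B has a co-cone in G, then A has a co-cone in G. -/
section Proof

variable {V : Type}

open Classical in
private lemma extend_hom_aux {G : SimpleGraph V} {A : Finset V} {f : V → V}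
    (hf : IsHomOn G A f) {a b : V} (ha : a ∉ A)
    (hco : ∀ u ∈ A, G.Adj a u → G.Adj b (f u)) :
    IsHomOn G (insert a A) (extendBy f a b) := by
  classical
  have hval : ∀ u ∈ A, extendBy f a b u = f u := by
    intro u hu
    unfold extendBy
    exact Function.update_of_ne (ne_of_mem_of_not_mem hu ha) _ _
  have hvala : extendBy f a b a = b := by unfold extendBy; exact Function.update_self a b f
  intro u v hu hv huv
  rcases Finset.mem_insert.1 hu with rfl | hu'
  · rcases Finset.mem_insert.1 hv with rfl | hv'
    · exact absurd huv (G.irrefl)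
    · rw [hvala, hval v hv']
      exact hco v hv' huv
  · rcases Finset.mem_insert.1 hv with rfl | hv'
    · rw [hvala, hval u hu']
      exact (hco u hu' huv.symm).symm
    · rw [hval u hu', hval v hv']
      exact hf hu' hv' huv

private lemma cond2_dagger [Infinite V] {G : SimpleGraph V}
    (h2 : ∀ A B : Finset V,
      (∃ f : V → V, IsHomOn G A f ∧ f '' (↑A : Set V) = (↑B : Set V)) →
      HasCoCone G B → HasCoCone G A) :
    PropDagger G := by
  classical
  intro A f hf b hb
  set S : Finset V := A.filter (fun u => ¬ G.Adj b (f u)) with hSdef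
  have hSA : S ⊆ A := Finset.filter_subset _ _
  have key : ∀ a : V, a ∉ A → (∀ s ∈ S, ¬ G.Adj a s) →
      a ∉ A ∧ IsHomOn G (insert a A) (extendBy f a b) := by
    intro a ha hna
    refine ⟨ha, extend_hom_aux hf ha ?_⟩
    intro u hu hadj
    by_contra hbu
    exact hna u (Finset.mem_filter.2 ⟨hu, hbu⟩) hadj
  by_cases hSe : S.Nonempty
  · set T : Finset V := S.image f with hTdef
    have hbT : IsCoCone G T b := by
      constructor
      · intro hbT
        obtain ⟨s, hs, hsb⟩ := Finset.mem_image.1 hbT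
        exact hb ⟨s, Finset.mem_coe.2 (hSA hs), hsb⟩
      · intro t ht hadj
        obtain ⟨s, hs, rfl⟩ := Finset.mem_image.1 ht
        exact (Finset.mem_filter.1 hs).2 hadj
    -- co-cone over S via condition (2) with f|S : S ↠ T
    have hcS : HasCoCone G S := by
      refine h2 S T ⟨f, ?_, ?_⟩ ⟨b, hbT⟩
      · intro u v hu hv huv
        exact hf (hSA hu) (hSA hv) huv
      · rw [hTdef, Finset.coe_image]
    obtain ⟨a₀, ha₀S, ha₀adj⟩ := hcS
    by_cases ha₀A : a₀ ∈ A
    · -- all work: maximal independent set argument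
      obtain ⟨t₀, ht₀⟩ : T.Nonempty := hSe.image f
      have hbnT : b ∉ T := hbT.1
      -- insert b T has a co-cone
      have hins : HasCoCone G (insert b T) := by
        refine h2 (insert b T) T ⟨fun x => if x = b then t₀ else x, ?_, ?_⟩ ⟨b, hbT⟩
        · intro u v hu hv huv
          have hub : u ≠ b := by
            rintro rfl
            rcases Finset.mem_insert.1 hv with rfl | hv'
            · exact G.irrefl huv
            · exact hbT.2 v hv' huv
          have hvb : v ≠ b := by
            rintro rfl
            rcases Finset.mem_insert.1 hu with rfl | hu'
            · exact G.irrefl huv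
            · exact hbT.2 u hu' huv.symm
          simpa [hub, hvb] using huv
        · ext x
          constructor
          · rintro ⟨y, hy, rfl⟩
            rcases Finset.mem_insert.1 (Finset.mem_coe.1 hy) with rfl | hy'
            · simpa using ht₀
            · have hyb : y ≠ b := fun h => hbnT (h ▸ hy')
              simpa [hyb] using hy'
          · intro hx
            have hxb : x ≠ b := fun h => hbnT (h ▸ (Finset.mem_coe.1 hx))
            exact ⟨x, Finset.mem_coe.2 (Finset.mem_insert_of_mem (Finset.mem_coe.1 hx)), by simp [hxb]⟩
      -- family of independent sets of co-cones over S inside A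
      set P : Finset V → Prop := fun M => M ⊆ A ∧
        (∀ m ∈ M, m ∉ S ∧ ∀ s ∈ S, ¬ G.Adj m s) ∧
        (∀ m ∈ M, ∀ m' ∈ M, ¬ G.Adj m m') with hPdef
      set PP : Finset (Finset V) := A.powerset.filter P with hPPdef
      have h0 : {a₀} ∈ PP := by
        refine Finset.mem_filter.2 ⟨Finset.mem_powerset.2 (by simpa using ha₀A), ?_, ?_, ?_⟩
        · simpa using ha₀A
        · intro m hm
          rcases Finset.mem_singleton.1 hm with rfl
          exact ⟨ha₀S, ha₀adj⟩
        · intro m hm m' hm'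
          rcases Finset.mem_singleton.1 hm with rfl
          rcases Finset.mem_singleton.1 hm' with rfl
          exact G.irrefl
      obtain ⟨M, hMPP, hMmax⟩ := Finset.exists_max_image PP Finset.card ⟨{a₀}, h0⟩
      obtain ⟨hMA, hMco, hMind⟩ := (Finset.mem_filter.1 hMPP).2
      have hMA' : M ⊆ A := Finset.mem_powerset.1 (Finset.mem_filter.1 hMPP).1
      have hMne : M.Nonempty := by
        rcases M.eq_empty_or_nonempty with rfl | h
        · have := hMmax {a₀} h0
          simp at this
        · exact h
      obtain ⟨m₀, hm₀⟩ := hMne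
      -- hom from S ∪ M onto insert b T
      have hcSM : HasCoCone G (S ∪ M) := by
        refine h2 (S ∪ M) (insert b T) ⟨fun x => if x ∈ S then f x else b, ?_, ?_⟩ hins
        · intro u v hu hv huv
          rcases Finset.mem_union.1 hu with hu' | hu'
          · rcases Finset.mem_union.1 hv with hv' | hv'
            · simpa [hu', hv'] using hf (hSA hu') (hSA hv') huv
            · exact absurd huv.symm ((hMco v hv').2 u hu')
          · rcases Finset.mem_union.1 hv with hv' | hv'
            · exact absurd huv ((hMco u hu').2 v hv')
            · exact absurd huv (hMind u hu' v hv')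
        · ext x
          constructor
          · rintro ⟨y, hy, rfl⟩
            by_cases hyS : y ∈ S
            · simp only [hyS, if_true]
              exact Finset.mem_coe.2 (Finset.mem_insert_of_mem (Finset.mem_image_of_mem f hyS))
            · simp only [hyS, if_false]
              exact Finset.mem_coe.2 (Finset.mem_insert_self b T)
          · intro hx
            rcases Finset.mem_insert.1 (Finset.mem_coe.1 hx) with rfl | hx'
            · refine ⟨m₀, Finset.mem_coe.2 (Finset.mem_union_right S hm₀), ?_⟩
              simp [(hMco m₀ hm₀).1]
            · obtain ⟨s, hs, rfl⟩ := Finset.mem_image.1 hx'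
              exact ⟨s, Finset.mem_coe.2 (Finset.mem_union_left M hs), by simp [hs]⟩
      obtain ⟨a, haSM, haadj⟩ := hcSM
      by_cases haA : a ∈ A
      · exfalso
        have haM : a ∉ M := fun h => haSM (Finset.mem_union_right S h)
        have haS : a ∉ S := fun h => haSM (Finset.mem_union_left M h)
        have hins' : insert a M ∈ PP := by
          refine Finset.mem_filter.2 ⟨Finset.mem_powerset.2 (Finset.insert_subset haA hMA'), ?_, ?_, ?_⟩
          · exact Finset.insert_subset haA hMA'
          · intro m hm
            rcases Finset.mem_insert.1 hm with rfl | hm'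
            · exact ⟨haS, fun s hs => haadj s (Finset.mem_union_left M hs)⟩
            · exact hMco m hm'
          · intro m hm m' hm'
            rcases Finset.mem_insert.1 hm with rfl | hm1
            · rcases Finset.mem_insert.1 hm' with rfl | hm2
              · exact G.irrefl
              · exact haadj m' (Finset.mem_union_right S hm2)
            · rcases Finset.mem_insert.1 hm' with rfl | hm2
              · exact fun h => haadj m (Finset.mem_union_right S hm1) h.symm
              · exact hMind m hm1 m' hm2
        have hcard := hMmax (insert a M) hins'
        rw [Finset.card_insert_of_notMem haM] at hcard
        omega
      · exact ⟨a, key a haA (fun s hs => haadj s (Finset.mem_union_left M hs))⟩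
    · exact ⟨a₀, key a₀ ha₀A ha₀adj⟩
  · obtain ⟨a, ha⟩ := Infinite.exists_notMem_finset A
    refine ⟨a, key a ha ?_⟩
    intro s hs
    exact absurd ⟨s, hs⟩ hSe

private lemma hh_dagger_he [Countable V] [Infinite V] {G : SimpleGraph V}
    (hHH : IsHHHom G) (hD : PropDagger G) : IsHEHom G := by
  classical
  intro A f hf
  have step : ∀ (B : Finset V) (g : V → V), IsHomOn G B g → ∀ v : V,
      ∃ (B' : Finset V) (g' : V → V), B ⊆ B' ∧ IsHomOn G B' g' ∧
        (∀ a ∈ B, g' a = g a) ∧ v ∈ B' ∧ ∃ w ∈ B', g' w = v := by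
    intro B g hg v
    obtain ⟨F, hF, hFa⟩ := hHH B g hg
    by_cases hv : ∃ w ∈ insert v B, F w = v
    · exact ⟨insert v B, F, Finset.subset_insert v B,
        fun u u' _ _ h => hF h, hFa, Finset.mem_insert_self v B, hv⟩
    · have hv' : v ∉ F '' (↑(insert v B) : Set V) := by
        rintro ⟨w, hw, hwv⟩
        exact hv ⟨w, Finset.mem_coe.1 hw, hwv⟩
      obtain ⟨a, haB, hhom⟩ := hD (insert v B) F (fun u u' _ _ h => hF h) v hv'
      refine ⟨insert a (insert v B), extendBy F a v,
        (Finset.subset_insert v B).trans (Finset.subset_insert a _), hhom, ?_, ?_, a,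
        Finset.mem_insert_self a _, by unfold extendBy; exact Function.update_self a v F⟩
      · intro a' ha'
        have : a' ≠ a := fun h => haB (h ▸ Finset.mem_insert_of_mem ha')
        rw [show extendBy F a v a' = F a' by unfold extendBy; exact Function.update_of_ne this _ _]
        exact hFa a' ha'
      · exact Finset.mem_insert_of_mem (Finset.mem_insert_self v B)
  choose B' g' hsub hhom hagree hmem w hwmem hwval using step
  obtain ⟨e⟩ : Nonempty (ℕ ≃ V) := by
    haveI : Encodable V := Encodable.ofCountable V
    haveI : Denumerable V := Denumerable.ofEncodableOfInfinite V
    exact ⟨(Denumerable.eqv V).symm⟩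
  let Q : ℕ → {p : Finset V × (V → V) // IsHomOn G p.1 p.2} := fun n =>
    Nat.rec ⟨(A, f), hf⟩
      (fun n p => ⟨(B' p.1.1 p.1.2 p.2 (e n), g' p.1.1 p.1.2 p.2 (e n)), hhom _ _ _ _⟩) n
  let An : ℕ → Finset V := fun n => (Q n).1.1
  let fn : ℕ → V → V := fun n => (Q n).1.2
  have hmono : ∀ n, An n ⊆ An (n + 1) := fun n => hsub _ _ _ _
  have hag : ∀ n, ∀ a ∈ An n, fn (n + 1) a = fn n a := fun n => hagree _ _ _ _
  have hmonole : ∀ m n, m ≤ n → An m ⊆ An n := by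
    intro m n h
    induction h with
    | refl => exact Finset.Subset.refl _
    | step h ih => exact ih.trans (hmono _)
  have hagle : ∀ m n, m ≤ n → ∀ a ∈ An m, fn n a = fn m a := by
    intro m n h
    induction h with
    | refl => intro a _; rfl
    | @step k h ih =>
        intro a ha
        rw [hag k a (hmonole m k h ha)]
        exact ih a ha
  have hmem' : ∀ n, e n ∈ An (n + 1) := fun n => hmem _ _ _ _
  have hAnv : ∀ v : V, v ∈ An (e.symm v + 1) := by
    intro v
    have := hmem' (e.symm v)
    rwa [e.apply_symm_apply] at this
  set F : V → V := fun v => fn (e.symm v + 1) v with hFdef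
  have hFv : ∀ n v, v ∈ An n → F v = fn n v := by
    intro n v hv
    rcases le_total n (e.symm v + 1) with h | h
    · exact hagle n (e.symm v + 1) h v hv
    · exact (hagle (e.symm v + 1) n h v (hAnv v)).symm
  refine ⟨F, ⟨?_, ?_⟩, ?_⟩
  · intro u v huv
    set n : ℕ := max (e.symm u + 1) (e.symm v + 1) with hn
    have hu : u ∈ An n := hmonole _ n (le_max_left _ _) (hAnv u)
    have hv : v ∈ An n := hmonole _ n (le_max_right _ _) (hAnv v)
    rw [hFv n u hu, hFv n v hv]
    exact (Q n).2 hu hv huv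
  · intro v
    set n : ℕ := e.symm v with hn
    have hwm : w (An n) (fn n) (Q n).2 (e n) ∈ An (n + 1) := hwmem _ _ _ _
    refine ⟨w (An n) (fn n) (Q n).2 (e n), ?_⟩
    rw [hFv (n + 1) _ hwm]
    have := hwval (An n) (fn n) (Q n).2 (e n)
    rw [hn] at this ⊢
    rw [show fn (e.symm v + 1) = g' (An (e.symm v)) (fn (e.symm v)) (Q (e.symm v)).2 (e (e.symm v)) from rfl]
    rw [this, e.apply_symm_apply]
  · intro a ha
    exact hFv 0 a ha

end Proof

/-- A countably infinite graph is HE-homogeneous iff it is HH-homogeneous,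
having a co-cone is an isomorphism invariant of finite subsets, and having a co-cone pulls
back along finite surjective homomorphisms. -/
theorem stmt_9 {V : Type} [Countable V] [Infinite V] (G : SimpleGraph V) :
    IsHEHom G ↔
      (IsHHHom G ∧
        (∀ A B : Finset V,
          Nonempty (G.induce (↑A : Set V) ≃g G.induce (↑B : Set V)) →
          (HasCoCone G A ↔ HasCoCone G B)) ∧
        (∀ A B : Finset V,
          (∃ f : V → V, IsHomOn G A f ∧ f '' (↑A : Set V) = (↑B : Set V)) →
          HasCoCone G B → HasCoCone G A)) := by
  classical
  constructor
  · intro hHE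
    have hHH : IsHHHom G := by
      intro A f hf
      obtain ⟨F, hF, ha⟩ := hHE A f hf
      exact ⟨F, hF.1, ha⟩
    have h2 : ∀ A B : Finset V,
        (∃ f : V → V, IsHomOn G A f ∧ f '' (↑A : Set V) = (↑B : Set V)) →
        HasCoCone G B → HasCoCone G A := by
      rintro A B ⟨g, hg, himg⟩ ⟨v, hvB, hvadj⟩
      obtain ⟨F, ⟨hFhom, hFsurj⟩, hFa⟩ := hHE A g hg
      obtain ⟨u, huv⟩ := hFsurj v
      refine ⟨u, ?_, ?_⟩
      · intro huA
        apply hvB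
        have : v ∈ (↑B : Set V) := by
          rw [← himg]
          exact ⟨u, Finset.mem_coe.2 huA, by rw [← hFa u huA]; exact huv⟩
        exact Finset.mem_coe.1 this
      · intro a haA hadj
        have h1 := hFhom hadj
        rw [huv, hFa a haA] at h1
        have hga : g a ∈ (↑B : Set V) := by
          rw [← himg]
          exact ⟨a, Finset.mem_coe.2 haA, rfl⟩
        exact hvadj (g a) (Finset.mem_coe.1 hga) h1
    have mk : ∀ (A B : Finset V),
        (G.induce (↑A : Set V) ≃g G.induce (↑B : Set V)) →
        ∃ f : V → V, IsHomOn G A f ∧ f '' (↑A : Set V) = (↑B : Set V) := by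
      intro A B e
      refine ⟨fun v => if h : v ∈ A then (e ⟨v, Finset.mem_coe.2 h⟩ : V) else v, ?_, ?_⟩
      · intro u v hu hv huv
        simp only [dif_pos hu, dif_pos hv]
        have : (G.induce (↑A : Set V)).Adj ⟨u, Finset.mem_coe.2 hu⟩ ⟨v, Finset.mem_coe.2 hv⟩ :=
          SimpleGraph.comap_adj.2 huv
        have h2' := e.map_rel_iff.2 this
        exact h2'
      · ext x
        constructor
        · rintro ⟨y, hy, rfl⟩
          have hyA : y ∈ A := Finset.mem_coe.1 hy
          simp only [dif_pos hyA]
          exact (e ⟨y, Finset.mem_coe.2 hyA⟩).2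
        · intro hx
          obtain ⟨z, hz⟩ := e.surjective ⟨x, hx⟩
          refine ⟨(z : V), z.2, ?_⟩
          have hzA : (z : V) ∈ A := Finset.mem_coe.1 z.2
          simp only [dif_pos hzA]
          rw [show (⟨(z : V), Finset.mem_coe.2 hzA⟩ : (↑A : Set V)) = z from rfl, hz]
    refine ⟨hHH, ?_, h2⟩
    rintro A B ⟨e⟩
    exact ⟨fun h => h2 B A (mk B A e.symm) h, fun h => h2 A B (mk A B e) h⟩
  · rintro ⟨hHH, _, h2⟩
    exact hh_dagger_he hHH (cond2_dagger h2)
end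

section
/- Let G be an MB-homogeneous simple graph on a countably infinite vertex set containing at least one nonedge (two distinct nonadjacent vertices). If A is a finite set of vertices of G such that some vertex of G is a co-cone over A, then there exists an infinite set of vertices, pairwise nonadjacent, each of which is a co-cone over A. -/
/-!
In an MB-homogeneous graph, a co-cone over the image of a finite monomorphism `f : A → G`
pulls back to a co-cone over `A`: extend `f` to a bijective endomorphism `F` and take the
`F`-preimage of the co-cone. Applied to a constant map, this gives every vertex `x` a
non-neighbour. There are infinitely many: otherwise extend the map fixing `x` and sending a
non-neighbour to a neighbour of `x`; `F⁻¹` maps the finitely many non-neighbours of `x`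
injectively into themselves, hence onto them, which the chosen value contradicts. Given a
co-cone `v` over `S`, a non-neighbour `t ∉ S` of `v` and the map `v ↦ t` fixing `S` then
produce a co-cone over `S ∪ {v}`. Iterating from a co-cone over `A`, each new co-cone is a
co-cone over `A` and over all earlier ones.
-/

section CoCones

variable {V : Type} {G : SimpleGraph V}

theorem IsCoCone.mono {S T : Finset V} {v : V} (hST : S ⊆ T) (hv : IsCoCone G T v) :
    IsCoCone G S v :=
  ⟨fun h => hv.1 (hST h), fun s hs => hv.2 s (hST hs)⟩

theorem mem_compl_neighborSet {x y : V} : y ∈ Gᶜ.neighborSet x ↔ x ≠ y ∧ ¬ G.Adj x y :=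
  SimpleGraph.compl_adj G x y

theorem isCoCone_singleton_iff {x z : V} : IsCoCone G {x} z ↔ z ∈ Gᶜ.neighborSet x := by
  simp [IsCoCone, eq_comm, G.adj_comm]

theorem isMonOn_of_forall_not_adj {A : Finset V} {f : V → V}
    (hA : ∀ a ∈ A, ∀ b ∈ A, ¬ G.Adj a b) (hf : Set.InjOn f A) : IsMonOn G A f :=
  ⟨fun a b ha hb hab => absurd hab (hA a ha b hb), hf⟩

theorem isMonOn_insert_update_id [DecidableEq V] {S : Finset V} {v t : V}
    (hv : IsCoCone G S v) (ht : t ∉ S) : IsMonOn G (insert v S) (Function.update id v t) := by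
  have hfix : ∀ s ∈ S, Function.update id v t s = s := fun s hs =>
    Function.update_of_ne (by rintro rfl; exact hv.1 hs) _ _
  refine ⟨fun a b ha hb hab => ?_, fun a ha b hb hab => ?_⟩
  · simp only [Finset.mem_insert] at ha hb
    rcases ha with rfl | ha <;> rcases hb with rfl | hb
    · exact absurd hab (G.loopless.irrefl _)
    · exact absurd hab (hv.2 b hb)
    · exact absurd hab.symm (hv.2 a ha)
    · rwa [hfix a ha, hfix b hb]
  · simp only [Finset.coe_insert, Set.mem_insert_iff, Finset.mem_coe] at ha hb
    rcases ha with rfl | ha <;> rcases hb with rfl | hb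
    · rfl
    · rw [Function.update_self, hfix b hb] at hab
      exact absurd (hab ▸ hb) ht
    · rw [Function.update_self, hfix a ha] at hab
      exact absurd (hab ▸ ha) ht
    · rwa [hfix a ha, hfix b hb] at hab

theorem IsMBHom.hasCoCone_of_image [DecidableEq V] (hMB : IsMBHom G) {A : Finset V}
    {f : V → V} (hf : IsMonOn G A f) (h : HasCoCone G (A.image f)) : HasCoCone G A := by
  obtain ⟨w, hwA, hw⟩ := h
  obtain ⟨F, ⟨hF, -, hFsurj⟩, hFf⟩ := hMB A f hf
  obtain ⟨z, rfl⟩ := hFsurj w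
  refine ⟨z, fun hz => hwA ?_, fun a ha hza => ?_⟩
  · exact Finset.mem_image.2 ⟨z, hz, (hFf z hz).symm⟩
  · exact hw (f a) (Finset.mem_image_of_mem f ha) (hFf a ha ▸ hF hza)

theorem IsMBHom.compl_neighborSet_nonempty (hMB : IsMBHom G)
    (hne : ∃ u v : V, u ≠ v ∧ ¬ G.Adj u v) (x : V) : (Gᶜ.neighborSet x).Nonempty := by
  classical
  obtain ⟨u, w, huw, huw'⟩ := hne
  have hmon : IsMonOn G {x} (fun _ => u) :=
    isMonOn_of_forall_not_adj (by simp) (by simp)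
  have hw : HasCoCone G ({u} : Finset V) :=
    ⟨w, isCoCone_singleton_iff.2 (mem_compl_neighborSet.2 ⟨huw, huw'⟩)⟩
  obtain ⟨z, hz⟩ := hMB.hasCoCone_of_image hmon (by simpa using hw)
  exact ⟨z, isCoCone_singleton_iff.1 hz⟩

theorem IsMBHom.infinite_compl_neighborSet [Infinite V] (hMB : IsMBHom G)
    (hne : ∃ u v : V, u ≠ v ∧ ¬ G.Adj u v) (x : V) : (Gᶜ.neighborSet x).Infinite := by
  classical
  set N := Gᶜ.neighborSet x
  intro hN
  obtain ⟨t₀, ht₀⟩ := hMB.compl_neighborSet_nonempty hne x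
  obtain ⟨t, ht⟩ := (hN.insert x).infinite_compl.nonempty
  have htx : t ≠ x := fun h => ht (Or.inl h)
  have ht₀x : t₀ ≠ x := fun h => mem_compl_neighborSet.1 ht₀ |>.1 h.symm
  have hmon : IsMonOn G {x, t₀} (Function.update id t₀ t) := by
    refine isMonOn_of_forall_not_adj ?_ ?_
    · simp only [Finset.mem_insert, Finset.mem_singleton]
      rintro a (rfl | rfl) b (rfl | rfl) <;> simp_all [G.adj_comm]
    · simp [htx.symm, ht₀x.symm]
  obtain ⟨F, ⟨hF, hFbij⟩, hFf⟩ := hMB _ _ hmon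
  have hFx : F x = x := by simp [hFf x (by simp), Function.update_of_ne ht₀x.symm]
  have hFt₀ : F t₀ = t := by simp [hFf t₀ (by simp)]
  have hNF : N ⊆ F '' N := by
    intro y hy
    obtain ⟨z, rfl⟩ := hFbij.2 y
    refine ⟨z, mem_compl_neighborSet.2 ⟨fun h => ?_, fun h => ?_⟩, rfl⟩
    · exact (mem_compl_neighborSet.1 hy).1 (by rw [← h, hFx])
    · exact (mem_compl_neighborSet.1 hy).2 (hFx ▸ hF h)
  have hFN : F '' N = N :=
    (Set.eq_of_subset_of_ncard_le hNF (Set.ncard_image_of_injective N hFbij.1).le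
      (hN.image F)).symm
  exact ht (Or.inr (hFN ▸ hFt₀ ▸ Set.mem_image_of_mem F ht₀))

theorem IsMBHom.hasCoCone_insert [DecidableEq V] [Infinite V] (hMB : IsMBHom G)
    (hne : ∃ u v : V, u ≠ v ∧ ¬ G.Adj u v) {S : Finset V} {v : V} (hv : IsCoCone G S v) :
    HasCoCone G (insert v S) := by
  obtain ⟨t, ht, htS⟩ := (hMB.infinite_compl_neighborSet hne v).exists_notMem_finset S
  obtain ⟨hvt, hvt'⟩ := mem_compl_neighborSet.1 ht
  refine hMB.hasCoCone_of_image (isMonOn_insert_update_id hv htS) ⟨v, ?_, ?_⟩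
  · simp only [Finset.mem_image, Finset.mem_insert, not_exists, not_and]
    rintro a (rfl | ha) h
    · exact hvt (by simpa using h.symm)
    · rw [Function.update_of_ne (by rintro rfl; exact hv.1 ha)] at h
      exact hv.1 (h ▸ ha)
  · simp only [Finset.mem_image, Finset.mem_insert]
    rintro _ ⟨a, rfl | ha, rfl⟩
    · simpa using hvt'
    · rw [Function.update_of_ne (by rintro rfl; exact hv.1 ha)]
      exact hv.2 a ha

theorem injective_and_pairwise_not_adj_of_isCoCone [DecidableEq V] {S : ℕ → Finset V}
    {v : ℕ → V} (hS : ∀ n, insert (v n) (S n) ⊆ S (n + 1))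
    (hcc : ∀ n, IsCoCone G (S n) (v n)) :
    Function.Injective v ∧ (Set.range v).Pairwise (fun a b => ¬ G.Adj a b) := by
  have hmono : Monotone S :=
    monotone_nat_of_le_succ fun n => (Finset.subset_insert _ _).trans (hS n)
  have hlt : ∀ m n, m < n → v n ≠ v m ∧ ¬ G.Adj (v n) (v m) := fun m n hmn => by
    have hm : v m ∈ S n := hmono hmn (hS m (Finset.mem_insert_self _ _))
    exact ⟨fun h => (hcc n).1 (h ▸ hm), (hcc n).2 _ hm⟩
  have hinj : Function.Injective v := fun m n h => by
    by_contra hmn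
    rcases lt_or_gt_of_ne hmn with hmn | hmn
    · exact (hlt m n hmn).1 h.symm
    · exact (hlt n m hmn).1 h
  refine ⟨hinj, ?_⟩
  rintro _ ⟨m, rfl⟩ _ ⟨n, rfl⟩ hmn
  rcases lt_or_gt_of_ne (hinj.ne_iff.1 hmn) with hmn | hmn
  · exact fun h => (hlt m n hmn).2 h.symm
  · exact (hlt n m hmn).2

theorem exists_infinite_pairwise_not_adj_isCoCone [DecidableEq V]
    (hext : ∀ (S : Finset V) (v : V), IsCoCone G S v → HasCoCone G (insert v S))
    {A : Finset V} {v₀ : V} (hv₀ : IsCoCone G A v₀) :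
    ∃ T : Set V, T.Infinite ∧ T.Pairwise (fun a b => ¬ G.Adj a b) ∧
      ∀ v ∈ T, IsCoCone G A v := by
  have : Nonempty V := ⟨v₀⟩
  choose! next hnext using hext
  let step : Finset V × V → Finset V × V := fun p => (insert p.2 p.1, next p.1 p.2)
  let S : ℕ → Finset V := fun n => (step^[n] (A, v₀)).1
  let v : ℕ → V := fun n => (step^[n] (A, v₀)).2
  have hS : ∀ n, S (n + 1) = insert (v n) (S n) := fun n => by
    simp only [S, v, Function.iterate_succ_apply', step]
  have hcc : ∀ n, IsCoCone G (S n) (v n) := by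
    intro n
    induction n with
    | zero => exact hv₀
    | succ n ih => simpa only [S, v, Function.iterate_succ_apply', step] using hnext _ _ ih
  obtain ⟨hinj, hpair⟩ := injective_and_pairwise_not_adj_of_isCoCone (fun n => (hS n).ge) hcc
  have hmono : Monotone S :=
    monotone_nat_of_le_succ fun n => (Finset.subset_insert _ _).trans (hS n).ge
  refine ⟨Set.range v, Set.infinite_range_of_injective hinj, hpair, ?_⟩
  rintro _ ⟨n, rfl⟩
  exact (hcc n).mono (hmono (Nat.zero_le n))

end CoCones

theorem stmt_12_general {V : Type} [Infinite V] (G : SimpleGraph V)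
    (hMB : IsMBHom G) (hne : ∃ u v : V, u ≠ v ∧ ¬ G.Adj u v)
    (A : Finset V) (hA : ∃ v : V, IsCoCone G A v) :
    ∃ T : Set V, T.Infinite ∧ T.Pairwise (fun a b => ¬ G.Adj a b) ∧
      ∀ v ∈ T, IsCoCone G A v := by
  classical
  obtain ⟨v₀, hv₀⟩ := hA
  exact exists_infinite_pairwise_not_adj_isCoCone
    (fun _ _ hv => hMB.hasCoCone_insert hne hv) hv₀

/-- In an MB-homogeneous countably infinite graph with a nonedge, any finite
set with a co-cone has an infinite independent set of co-cones. -/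
theorem stmt_12 {V : Type} [Countable V] [Infinite V] (G : SimpleGraph V)
    (hMB : IsMBHom G) (hne : ∃ u v : V, u ≠ v ∧ ¬ G.Adj u v)
    (A : Finset V) (hA : ∃ v : V, IsCoCone G A v) :
    ∃ T : Set V, T.Infinite ∧ T.Pairwise (fun a b => ¬ G.Adj a b) ∧
      ∀ v ∈ T, IsCoCone G A v :=
  stmt_12_general G hMB hne A hA
end

section
/- If G is an ME-homogeneous simple graph on a countably infinite vertex set, then the complement graph of G is MH-homogeneous. -/
theorem Function.Surjective.exists_leftInverse_eqOn {α β : Type*} {H : α → β} (hH : Surjective H)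
    {s : Set β} [DecidablePred (· ∈ s)] {f : β → α} (hf : ∀ b ∈ s, H (f b) = b) :
    ∃ F : β → α, LeftInverse H F ∧ Set.EqOn F f s := by
  refine ⟨s.piecewise f (surjInv hH), fun b => ?_, fun b hb => Set.piecewise_eq_of_mem _ _ _ hb⟩
  by_cases hb : b ∈ s
  · rw [Set.piecewise_eq_of_mem _ _ _ hb, hf b hb]
  · rw [Set.piecewise_eq_of_notMem _ _ _ hb, surjInv_eq hH]

section Complement

variable {V : Type} {G : SimpleGraph V}

theorem IsMonOn.leftInvOn_image_of_compl [DecidableEq V] {A : Finset V} {f g : V → V}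
    (hf : IsMonOn Gᶜ A f) (hg : Set.LeftInvOn g f A) : IsMonOn G (A.image f) g := by
  refine ⟨?_, ?_⟩
  · simp only [IsHomOn, Finset.mem_image]
    rintro _ _ ⟨a, ha, rfl⟩ ⟨b, hb, rfl⟩ hadj
    rw [hg ha, hg hb]
    by_contra hnadj
    have hne : a ≠ b := by
      rintro rfl
      exact G.loopless.irrefl _ hadj
    exact (hf.1 ha hb ⟨hne, hnadj⟩).2 hadj
  · rw [Finset.coe_image]
    exact hg.rightInvOn_image.injOn

theorem IsHomEndo.compl_of_leftInverse {H F : V → V} (hH : IsHomEndo G H)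
    (hHF : Function.LeftInverse H F) : IsHomEndo Gᶜ F := by
  rintro u v ⟨hne, hnadj⟩
  refine ⟨fun h => hne ?_, fun h => hnadj ?_⟩
  · rw [← hHF u, ← hHF v, h]
  · simpa only [hHF u, hHF v] using hH h

end Complement

theorem stmt_14_general {V : Type} (G : SimpleGraph V)
    (hME : IsMEHom G) : IsMHHom Gᶜ := by
  classical
  intro A f hf
  rcases isEmpty_or_nonempty V with _ | _
  · exact ⟨f, fun u => isEmptyElim u, fun _ _ => rfl⟩
  have hinv : Set.LeftInvOn (Function.invFunOn f A) f A := hf.2.leftInvOn_invFunOn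
  obtain ⟨H, ⟨hHhom, hHsurj⟩, hHext⟩ := hME _ _ (hf.leftInvOn_image_of_compl hinv)
  have hHf : ∀ a ∈ (A : Set V), H (f a) = a := fun a ha => by
    rw [hHext _ (Finset.mem_image_of_mem f ha), hinv ha]
  obtain ⟨F, hHF, hFf⟩ := hHsurj.exists_leftInverse_eqOn hHf
  exact ⟨F, hHhom.compl_of_leftInverse hHF, fun a ha => hFf ha⟩

/-- The complement of an ME-homogeneous countably infinite graph is
MH-homogeneous. -/
theorem stmt_14 {V : Type} [Countable V] [Infinite V] (G : SimpleGraph V)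
    (hME : IsMEHom G) : IsMHHom Gᶜ :=
  stmt_14_general G hME
end

section
/- Let G be a simple graph on a countably infinite vertex set that is disconnected (its vertex set is nonempty and G is not connected). Then G is ME-homogeneous if and only if there exists m, either a positive natural number or ℵ₀, such that G is isomorphic to the disjoint union of countably infinitely many complete graphs each on m vertices. -/
/-! A disconnected ME-homogeneous graph is a disjoint union of cliques: if two non-adjacent
vertices of one component were sent to two different components, a homomorphism extending
this map would carry a path between them to a path between those components. A homomorphism
is injective on cliques, so sending one vertex of a component `c` into a component `d` shows
`|c| ≤ |d|`: all components have the same size. With only finitely many components, some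
component is infinite; sending vertices of two distinct components into it gives a surjective
endomorphism whose induced map on the finite set of components is surjective but not injective.

Conversely, a finite monomorphism of `cliqueSum ι κ` sends each block injectively into a block;
it extends blockwise by permutations of `κ`, and since its domain meets only finitely many
blocks, the remaining infinitely many blocks can be sent onto all blocks. -/

open SimpleGraph Function

theorem exists_perm_eqOn_of_injOn {α : Type*} {s : Set α} (hs : s.Finite) {g : α → α}
    (hg : Set.InjOn g s) : ∃ e : Equiv.Perm α, Set.EqOn e g s := by
  have : Finite s := hs.to_subtype
  obtain ⟨e, he⟩ : ∃ e : α ≃ α, ∀ x : s, e x = s.domRestrict g x := by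
    cases finite_or_infinite α
    · exact Cardinal.extend_function_finite ⟨_, hg.injective⟩ ⟨Equiv.refl α⟩
    · exact Cardinal.extend_function_of_lt ⟨_, hg.injective⟩
        (hs.lt_aleph0.trans_le (Cardinal.aleph0_le_mk α)) ⟨Equiv.refl α⟩
  exact ⟨e, fun x hx => he ⟨x, hx⟩⟩

theorem exists_surjective_eqOn {α : Type*} [Infinite α] {s : Set α} (hs : s.Finite)
    (t : α → α) : ∃ t' : α → α, Surjective t' ∧ Set.EqOn t' t s := by
  classical
  obtain ⟨τ⟩ : Nonempty (↥sᶜ ≃ α) := Cardinal.eq.mp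
    (Cardinal.mk_compl_of_infinite s (hs.lt_aleph0.trans_le (Cardinal.aleph0_le_mk α)))
  refine ⟨fun i => if h : i ∈ s then t i else τ ⟨i, h⟩, fun y => ⟨τ.symm y, ?_⟩,
    fun i hi => dif_pos hi⟩
  simp [dif_neg (τ.symm y).2]

section CliqueSum

variable {ι κ : Type}

theorem cliqueSum_adj {p q : ι × κ} : (cliqueSum ι κ).Adj p q ↔ p ≠ q ∧ p.1 = q.1 := by
  simp only [cliqueSum, fromRel_adj, eq_comm (a := q.1), or_self]

theorem isEpiEndo_cliqueSum {t : ι → ι} (ht : Surjective t) (e : ι → Equiv.Perm κ) :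
    IsEpiEndo (cliqueSum ι κ) (fun p => (t p.1, e p.1 p.2)) := by
  refine ⟨?_, fun q => ?_⟩
  · rintro ⟨i, x⟩ ⟨j, y⟩ h
    obtain ⟨hne, rfl : i = j⟩ := cliqueSum_adj.mp h
    exact cliqueSum_adj.mpr ⟨fun h' => hne (by simpa using h'), rfl⟩
  · obtain ⟨i, hi⟩ := ht q.1
    exact ⟨(i, (e i).symm q.2), by simp [hi]⟩

theorem isMEHom_cliqueSum [Infinite ι] : IsMEHom (cliqueSum ι κ) := by
  classical
  rintro A f ⟨hhom, hinj⟩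
  have hblock : ∀ i, ∃ (j : ι) (e : Equiv.Perm κ), ∀ x, (i, x) ∈ A → f (i, x) = (j, e x) := by
    intro i
    obtain ⟨j, hj⟩ : ∃ j, ∀ x, (i, x) ∈ A → (f (i, x)).1 = j := by
      by_cases h : ∃ x, (i, x) ∈ A
      · obtain ⟨x₀, hx₀⟩ := h
        refine ⟨(f (i, x₀)).1, fun x hx => ?_⟩
        by_cases hxx₀ : x = x₀
        · rw [hxx₀]
        · refine (cliqueSum_adj.mp (hhom hx hx₀ (cliqueSum_adj.mpr ⟨?_, rfl⟩))).2
          simpa using hxx₀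
      · exact ⟨i, fun x hx => absurd ⟨x, hx⟩ h⟩
    have hfin : (Prod.mk i ⁻¹' (A : Set (ι × κ))).Finite :=
      A.finite_toSet.preimage (Prod.mk_right_injective i).injOn
    obtain ⟨e, he⟩ := exists_perm_eqOn_of_injOn hfin (g := fun x => (f (i, x)).2)
      fun x hx y hy hxy => by
        simpa using hinj hx hy (Prod.ext ((hj x hx).trans (hj y hy).symm) hxy)
    exact ⟨j, e, fun x hx => Prod.ext (hj x hx) (he hx).symm⟩
  choose t e he using hblock
  obtain ⟨t', ht', htt'⟩ := exists_surjective_eqOn (A.image Prod.fst).finite_toSet t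
  refine ⟨fun p => (t' p.1, e p.1 p.2), isEpiEndo_cliqueSum ht' e, fun p hp => ?_⟩
  rw [he p.1 p.2 hp]
  exact Prod.ext (htt' (Finset.mem_image_of_mem Prod.fst hp)) rfl

end CliqueSum

theorem isMEHom_of_iso {V W : Type} {G : SimpleGraph V} {H : SimpleGraph W} (e : G ≃g H)
    (hH : IsMEHom H) : IsMEHom G := by
  classical
  rintro A f ⟨hhom, hinj⟩
  have hmon : IsMonOn H (A.image e) (fun w => e (f (e.symm w))) := by
    constructor
    · intro _ _ hu' hv' h
      obtain ⟨u, hu, rfl⟩ := Finset.mem_image.mp hu'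
      obtain ⟨v, hv, rfl⟩ := Finset.mem_image.mp hv'
      simp only [RelIso.symm_apply_apply]
      exact e.map_adj_iff.mpr (hhom hu hv (e.map_adj_iff.mp h))
    · simp only [Finset.coe_image]
      rintro _ ⟨u, hu, rfl⟩ _ ⟨v, hv, rfl⟩ h
      simp only [RelIso.symm_apply_apply, EmbeddingLike.apply_eq_iff_eq] at h
      rw [hinj hu hv h]
  obtain ⟨F, ⟨hFhom, hFsurj⟩, hFext⟩ := hH _ _ hmon
  refine ⟨fun v => e.symm (F (e v)), ⟨fun u v h => ?_, ?_⟩, fun a ha => ?_⟩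
  · exact e.symm.map_adj_iff.mpr (hFhom (e.map_adj_iff.mpr h))
  · exact e.symm.surjective.comp (hFsurj.comp e.surjective)
  · simp [hFext (e a) (Finset.mem_image_of_mem e ha)]

section Components

variable {V : Type} {G : SimpleGraph V}

theorem IsMEHom.isMHHom (hG : IsMEHom G) : IsMHHom G := fun A f hf =>
  let ⟨F, hF, hFf⟩ := hG A f hf
  ⟨F, hF.1, hFf⟩

def IsHomEndo.toHom {F : V → V} (hF : IsHomEndo G F) : G →g G := ⟨F, fun h => hF h⟩

theorem IsHomEndo.reachable {F : V → V} (hF : IsHomEndo G F) {u v : V} (h : G.Reachable u v) :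
    G.Reachable (F u) (F v) :=
  h.map hF.toHom

theorem isMonOn_singleton (x : V) (f : V → V) : IsMonOn G {x} f := by
  refine ⟨fun u v hu hv h => ?_, by simp⟩
  rw [Finset.mem_singleton] at hu hv
  exact (G.irrefl (hu ▸ hv ▸ h)).elim

theorem exists_isMonOn_pair [DecidableEq V] {x y z z' : V} (hxy : x ≠ y) (hadj : ¬G.Adj x y)
    (hz : z ≠ z') :
    ∃ f : V → V, IsMonOn G {x, y} f ∧ f x = z ∧ f y = z' := by
  refine ⟨fun v => if v = x then z else z', ⟨?_, ?_⟩, if_pos rfl, if_neg hxy.symm⟩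
  · intro u v hu hv h
    simp only [Finset.mem_insert, Finset.mem_singleton] at hu hv
    rcases hu with rfl | rfl <;> rcases hv with rfl | rfl
    exacts [(G.irrefl h).elim, (hadj h).elim, (hadj h.symm).elim, (G.irrefl h).elim]
  · rw [Finset.coe_pair, Set.injOn_pair]
    simp [hxy.symm, hz]

theorem exists_not_reachable (h : ¬G.Preconnected) : ∃ w w', ¬G.Reachable w w' := by
  simpa [Preconnected] using h

theorem IsMHHom.adj_of_reachable (hG : IsMHHom G) (hdisc : ¬G.Preconnected) {u v : V}
    (huv : G.Reachable u v) (hne : u ≠ v) : G.Adj u v := by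
  classical
  by_contra hadj
  obtain ⟨w, w', hww'⟩ := exists_not_reachable hdisc
  obtain ⟨f, hf, rfl, rfl⟩ :=
    exists_isMonOn_pair (z := w) (z' := w') hne hadj (by rintro rfl; exact hww' .rfl)
  obtain ⟨F, hF, hFf⟩ := hG _ f hf
  apply hww'
  rw [← hFf u (by simp), ← hFf v (by simp)]
  exact hF.reachable huv

theorem IsMHHom.mk_supp_le (hG : IsMHHom G)
    (hclique : ∀ ⦃u v : V⦄, G.Reachable u v → u ≠ v → G.Adj u v) (c d : G.ConnectedComponent) :
    Cardinal.mk c.supp ≤ Cardinal.mk d.supp := by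
  induction c using ConnectedComponent.ind with | h x =>
  induction d using ConnectedComponent.ind with | h y =>
  obtain ⟨F, hF, hFf⟩ := hG {x} (fun _ => y) (isMonOn_singleton x _)
  have hmaps : ∀ v ∈ (G.connectedComponentMk x).supp, F v ∈ (G.connectedComponentMk y).supp := by
    intro v hv
    rw [ConnectedComponent.mem_supp_iff, ConnectedComponent.eq] at hv ⊢
    simpa [hFf x (Finset.mem_singleton_self x)] using hF.reachable hv
  refine Cardinal.mk_le_of_injective (f := fun v => ⟨F v, hmaps v v.2⟩) ?_
  rintro ⟨u, hu⟩ ⟨v, hv⟩ h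
  by_contra hne
  rw [ConnectedComponent.mem_supp_iff] at hu hv
  refine (hF (hclique (ConnectedComponent.eq.mp (hu.trans hv.symm)) ?_)).ne
    (congrArg Subtype.val h)
  exact fun huv => hne (Subtype.ext huv)

theorem IsMHHom.mk_supp_eq (hG : IsMHHom G)
    (hclique : ∀ ⦃u v : V⦄, G.Reachable u v → u ≠ v → G.Adj u v) (c d : G.ConnectedComponent) :
    Cardinal.mk c.supp = Cardinal.mk d.supp :=
  le_antisymm (hG.mk_supp_le hclique c d) (hG.mk_supp_le hclique d c)

theorem IsMEHom.infinite_connectedComponent [Infinite V] (hG : IsMEHom G)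
    (hdisc : ¬G.Preconnected) : Infinite G.ConnectedComponent := by
  classical
  by_contra hfin
  rw [not_infinite_iff_finite] at hfin
  obtain ⟨c, hc⟩ := Finite.exists_infinite_fiber G.connectedComponentMk
  obtain ⟨⟨z, hz⟩, ⟨z', hz'⟩, hzz'⟩ := exists_pair_ne (G.connectedComponentMk ⁻¹' {c})
  obtain ⟨w, w', hww'⟩ := exists_not_reachable hdisc
  obtain ⟨f, hf, hfw, hfw'⟩ := exists_isMonOn_pair (by rintro rfl; exact hww' .rfl)
    (fun h => hww' h.reachable) (fun h => hzz' (Subtype.ext h))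
  obtain ⟨F, ⟨hF, hFsurj⟩, hFf⟩ := hG _ f hf
  have hφ : Surjective (ConnectedComponent.map hF.toHom) := by
    refine ConnectedComponent.ind fun v => ?_
    obtain ⟨u, rfl⟩ := hFsurj v
    exact ⟨G.connectedComponentMk u, ConnectedComponent.map_mk _ u⟩
  refine hww' (ConnectedComponent.eq.mp (Finite.injective_iff_surjective.mpr hφ ?_))
  simp only [ConnectedComponent.map_mk]
  rw [show hF.toHom w = z from (hFf w (by simp)).trans hfw,
    show hF.toHom w' = z' from (hFf w' (by simp)).trans hfw']
  exact hz.trans hz'.symm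

theorem nonempty_iso_cliqueSum {ι κ : Type}
    (hclique : ∀ ⦃u v : V⦄, G.Reachable u v → u ≠ v → G.Adj u v)
    (σ : G.ConnectedComponent ≃ ι) (β : ∀ c : G.ConnectedComponent, c.supp ≃ κ) :
    Nonempty (G ≃g cliqueSum ι κ) := by
  let e : V ≃ ι × κ := (Equiv.sigmaFiberEquiv G.connectedComponentMk).symm.trans
    ((Equiv.sigmaCongrRight β).trans ((Equiv.sigmaEquivProd _ κ).trans (σ.prodCongr (.refl κ))))
  have he : ∀ v, (e v).1 = σ (G.connectedComponentMk v) := fun v => rfl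
  refine ⟨⟨e, fun {u v} => ?_⟩⟩
  rw [cliqueSum_adj, e.injective.ne_iff, he, he, σ.injective.eq_iff, ConnectedComponent.eq]
  exact ⟨fun ⟨hne, hr⟩ => hclique hr hne, fun h => ⟨h.ne, h.reachable⟩⟩

end Components

theorem stmt_18_general {V : Type} [Countable V] [Infinite V] (G : SimpleGraph V)
    (hdisc : ¬ G.Connected) :
    IsMEHom G ↔
      ∃ m : Cardinal, 0 < m ∧ m ≤ Cardinal.aleph0 ∧
        ∃ κ : Type, Cardinal.mk κ = m ∧ Nonempty (G ≃g cliqueSum ℕ κ) := by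
  have hdisc' : ¬G.Preconnected := fun h => hdisc ⟨h⟩
  constructor
  · intro hME
    have hclique : ∀ ⦃u v : V⦄, G.Reachable u v → u ≠ v → G.Adj u v :=
      fun _ _ => hME.isMHHom.adj_of_reachable hdisc'
    have : Infinite G.ConnectedComponent := hME.infinite_connectedComponent hdisc'
    have : Countable G.ConnectedComponent := Quot.mk_surjective.countable
    obtain ⟨σ⟩ : Nonempty (G.ConnectedComponent ≃ ℕ) := nonempty_equiv_of_countable
    let c₀ := G.connectedComponentMk (Classical.arbitrary V)
    have hβ : ∀ c : G.ConnectedComponent, Nonempty (c.supp ≃ c₀.supp) := fun c =>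
      Cardinal.eq.mp (hME.isMHHom.mk_supp_eq hclique c c₀)
    refine ⟨Cardinal.mk c₀.supp, pos_iff_ne_zero.mpr (Cardinal.mk_ne_zero_iff.mpr ⟨⟨_, rfl⟩⟩),
      Cardinal.mk_le_aleph0, c₀.supp, rfl, nonempty_iso_cliqueSum hclique σ fun c => (hβ c).some⟩
  · rintro ⟨-, -, -, κ, -, ⟨e⟩⟩
    exact isMEHom_of_iso e isMEHom_cliqueSum

/-- A disconnected countably infinite graph is ME-homogeneous iff it is
isomorphic to a disjoint union of countably infinitely many complete graphs each on `m`
vertices, where `m` is a positive natural number or `ℵ₀`. -/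
theorem stmt_18 {V : Type} [Countable V] [Infinite V] (G : SimpleGraph V)
    (hne : Nonempty V) (hdisc : ¬ G.Connected) :
    IsMEHom G ↔
      ∃ m : Cardinal, 0 < m ∧ m ≤ Cardinal.aleph0 ∧
        ∃ κ : Type, Cardinal.mk κ = m ∧ Nonempty (G ≃g cliqueSum ℕ κ) :=
  stmt_18_general G hdisc
end
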